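/- arXiv:1102.4489 — 8 statements merged into one kernel-verified Lean document; each statement's English description precedes it below -/
import Mathlib

section
/- Let A ∈ 𝓕 with P(A) > 0, let x⁺ > 0, and suppose λ > 0 satisfies E[ξ I(λξ) 1_A] = x⁺. Then Z* := I(λξ) 1_A belongs to H₁(A, x⁺), it maximizes Z ↦ E[u(Z⁺)] over H₁(A, x⁺), and any other maximizer in H₁(A, x⁺) coincides with Z* almost surely. -/
/-!
Since `u` is strictly concave, for `y > 0` the point `I y` is the unique maximiser of
`x ↦ u x - x y` on `[0, ∞)`, with maximum `v y`. Applied with `y = λ ξ(ω)` this says that `Z*`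
maximises the pointwise Lagrangian `u(Z⁺) - λ ξ Z` among admissible values, strictly.
Integrating, `E[u(Z⁺)] - λ E[ξZ] ≤ E[u(Z*)] - λ x⁺` for every `Z ∈ H₁(A, x⁺)`, and the budget
constraint `E[ξZ] ≤ x⁺` gives optimality. Equal expected utility forces equality of the
Lagrangians almost surely, hence `Z = Z*` almost surely by strictness.
-/

open MeasureTheory Set Filter
open scoped Classical ENNReal

noncomputable section

variable {Ω : Type*} [MeasurableSpace Ω]

/-- The set `H₁(A, x⁺)` of admissible gain parts. -/
def H1 (P : Measure Ω) (ξ : Ω → ℝ) (A : Set Ω) (x : ℝ) : Set (Ω → ℝ) :=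
  {Z | Integrable (fun ω => ξ ω * Z ω) P ∧ (∫ ω, ξ ω * Z ω ∂P) ≤ x ∧
    (∀ᵐ ω ∂P, ω ∉ A → Z ω = 0) ∧ (∀ᵐ ω ∂P, ω ∈ A → 0 ≤ Z ω)}

/-- `E[u(Z⁺)]`. -/
def Uof (P : Measure Ω) (u : ℝ → ℝ) (Z : Ω → ℝ) : ℝ := ∫ ω, u (max (Z ω) 0) ∂P

/-- The convex conjugate `v(y) = sup_{x ≥ 0} (u(x) - x y)`. -/
def vconj (u : ℝ → ℝ) (y : ℝ) : ℝ := sSup {z | ∃ x ≥ (0:ℝ), z = u x - x * y}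

open scoped Topology

theorem StrictConcaveOn.lt_add_mul_sub_of_hasDerivWithinAt {S : Set ℝ} {f : ℝ → ℝ}
    {f' x y : ℝ} (hf : StrictConcaveOn ℝ S f) (hx : x ∈ S) (hy : y ∈ S) (hyx : y ≠ x)
    (hd : HasDerivWithinAt f f' S x) : f y < f x + f' * (y - x) := by
  rcases hyx.lt_or_gt with hlt | hgt
  · have h := hf.lt_slope_of_hasDerivWithinAt hy hx hlt hd
    rw [slope_def_field, lt_div_iff₀ (sub_pos.2 hlt)] at h
    linear_combination h
  · have h := hf.slope_lt_of_hasDerivWithinAt hx hy hgt hd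
    rw [slope_def_field, div_lt_iff₀ (sub_pos.2 hgt)] at h
    linear_combination h

theorem forall_lt_of_tendsto_atTop_of_forall_ne {f : ℝ → ℝ} {a c y : ℝ}
    (hf : ContinuousOn f (Ioi a)) (hlim : Tendsto f atTop (𝓝 c)) (hcy : c < y)
    (hne : ∀ x > a, f x ≠ y) : ∀ x > a, f x < y := by
  intro x hx
  by_contra! hge
  obtain ⟨b, hb⟩ := eventually_atTop.mp (hlim.eventually_lt_const hcy)
  have hxb : x ≤ max b (x + 1) := (lt_add_one x).le.trans (le_max_right _ _)
  obtain ⟨t, ht, hft⟩ := intermediate_value_Icc' hxb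
    (hf.mono fun t ht => hx.trans_le ht.1) ⟨(hb _ (le_max_left _ _)).le, hge⟩
  exact hne t (hx.trans_le ht.1) hft

def IsUniqueMaximizer (u : ℝ → ℝ) (y x₀ : ℝ) : Prop :=
  0 ≤ x₀ ∧ ∀ x ≥ 0, x ≠ x₀ → u x - x * y < u x₀ - x₀ * y

namespace IsUniqueMaximizer

variable {u : ℝ → ℝ} {x x₀ y : ℝ}

theorem sub_mul_le (h : IsUniqueMaximizer u y x₀) (hx : 0 ≤ x) :
    u x - x * y ≤ u x₀ - x₀ * y := by
  rcases eq_or_ne x x₀ with rfl | hne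
  exacts [le_rfl, (h.2 x hx hne).le]

theorem eq_of_sub_mul_eq (h : IsUniqueMaximizer u y x₀) (hx : 0 ≤ x)
    (heq : u x - x * y = u x₀ - x₀ * y) : x = x₀ :=
  by_contra fun hne => (h.2 x hx hne).ne heq

theorem vconj_eq (h : IsUniqueMaximizer u y x₀) : vconj u y = u x₀ - x₀ * y :=
  IsGreatest.csSup_eq ⟨⟨x₀, h.1, rfl⟩, by rintro _ ⟨x, hx, rfl⟩; exact h.sub_mul_le hx⟩

end IsUniqueMaximizer

theorem isUniqueMaximizer_inverse {u u' I : ℝ → ℝ}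
    (hu_d1 : ∀ x ∈ Ici (0:ℝ), HasDerivWithinAt u (u' x) (Ici 0) x)
    (hu'_cont : ContinuousOn u' (Ici 0))
    (hu_conc : StrictConcaveOn ℝ (Ici 0) u)
    (hu'lim : Tendsto u' atTop (𝓝 0))
    (hI1 : ∀ y : ℝ, 0 < y → (∃ x > (0:ℝ), u' x = y) → 0 < I y ∧ u' (I y) = y)
    (hI2 : ∀ y : ℝ, 0 < y → (∀ x > (0:ℝ), u' x < y) → I y = 0)
    {y : ℝ} (hy : 0 < y) : IsUniqueMaximizer u y (I y) := by
  by_cases h : ∃ x > 0, u' x = y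
  · obtain ⟨hIpos, hIu'⟩ := hI1 y hy h
    refine ⟨hIpos.le, fun x hx hne => ?_⟩
    have := hu_conc.lt_add_mul_sub_of_hasDerivWithinAt hIpos.le hx hne (hu_d1 _ hIpos.le)
    rw [hIu'] at this
    linarith
  · -- `u'` is continuous and tends to `0 < y`, so missing the value `y` keeps it below `y`.
    push Not at h
    have hlt := forall_lt_of_tendsto_atTop_of_forall_ne
      (hu'_cont.mono Ioi_subset_Ici_self) hu'lim hy h
    have hu'0 : u' 0 ≤ y :=
      le_of_tendsto ((hu'_cont 0 self_mem_Ici).mono_left (nhdsWithin_mono _ Ioi_subset_Ici_self))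
        (eventually_mem_nhdsWithin.mono fun t ht => (hlt t ht).le)
    rw [hI2 y hy hlt]
    refine ⟨le_rfl, fun x hx hne => ?_⟩
    have := hu_conc.lt_add_mul_sub_of_hasDerivWithinAt self_mem_Ici hx hne (hu_d1 0 self_mem_Ici)
    nlinarith

theorem AEMeasurable.of_mul_left {P : Measure Ω} {f g : Ω → ℝ}
    (hfg : AEMeasurable (fun ω => f ω * g ω) P) (hf : Measurable f)
    (hf0 : ∀ᵐ ω ∂P, f ω ≠ 0) : AEMeasurable g P :=
  (hfg.mul hf.aemeasurable.inv).congr <| hf0.mono fun ω h => by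
    simp only [Pi.mul_apply, Pi.inv_apply]
    field_simp

section Lagrangian

variable {P : Measure Ω} {ξ : Ω → ℝ} {u I : ℝ → ℝ}
  {A : Set Ω} {lam x : ℝ}

def lagrangian (u : ℝ → ℝ) (ξ : Ω → ℝ) (lam : ℝ) (Z : Ω → ℝ) (ω : Ω) : ℝ :=
  u (max (Z ω) 0) - lam * (ξ ω * Z ω)

def optimalClaim (I : ℝ → ℝ) (ξ : Ω → ℝ) (lam : ℝ) (A : Set Ω) : Ω → ℝ :=
  A.indicator fun ω => I (lam * ξ ω)

theorem optimalClaim_mem_H1 (hξpos : ∀ᵐ ω ∂P, 0 < ξ ω) (hlam : 0 < lam)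
    (hI : ∀ y > 0, 0 ≤ I y) (hint : Integrable (fun ω => ξ ω * optimalClaim I ξ lam A ω) P)
    (hbud : ∫ ω, ξ ω * optimalClaim I ξ lam A ω ∂P ≤ x) :
    optimalClaim I ξ lam A ∈ H1 P ξ A x := by
  refine ⟨hint, hbud, ae_of_all _ fun ω hω => indicator_of_notMem hω _, ?_⟩
  filter_upwards [hξpos] with ω hξω hωA
  rw [optimalClaim, indicator_of_mem hωA]
  exact hI _ (mul_pos hlam hξω)

theorem lagrangian_optimalClaim_ae_eq (hξpos : ∀ᵐ ω ∂P, 0 < ξ ω) (hlam : 0 < lam) (hu0 : u 0 = 0)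
    (hmax : ∀ y > 0, IsUniqueMaximizer u y (I y)) :
    lagrangian u ξ lam (optimalClaim I ξ lam A) =ᵐ[P] A.indicator fun ω => vconj u (lam * ξ ω) := by
  filter_upwards [hξpos] with ω hξω
  have hI := hmax _ (mul_pos hlam hξω)
  by_cases hωA : ω ∈ A
  · rw [lagrangian, optimalClaim, indicator_of_mem hωA, indicator_of_mem hωA, max_eq_left hI.1,
      hI.vconj_eq]
    ring
  · simp [lagrangian, optimalClaim, hωA, hu0]

theorem ae_lagrangian_le_optimalClaim (hξpos : ∀ᵐ ω ∂P, 0 < ξ ω) (hlam : 0 < lam)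
    (hmax : ∀ y > 0, IsUniqueMaximizer u y (I y))
    {Z : Ω → ℝ} (hZ : Z ∈ H1 P ξ A x) :
    ∀ᵐ ω ∂P, lagrangian u ξ lam Z ω ≤ lagrangian u ξ lam (optimalClaim I ξ lam A) ω ∧
      (lagrangian u ξ lam Z ω = lagrangian u ξ lam (optimalClaim I ξ lam A) ω →
        Z ω = optimalClaim I ξ lam A ω) := by
  obtain ⟨-, -, hZoff, hZnn⟩ := hZ
  filter_upwards [hξpos, hZoff, hZnn] with ω hξω hoff hnn
  have hI := hmax _ (mul_pos hlam hξω)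
  by_cases hωA : ω ∈ A
  · have hZω := hnn hωA
    have hcomm : ∀ z, lam * (ξ ω * z) = z * (lam * ξ ω) := fun z => by ring
    simp only [lagrangian, optimalClaim, indicator_of_mem hωA, max_eq_left hZω, max_eq_left hI.1,
      hcomm]
    exact ⟨hI.sub_mul_le hZω, hI.eq_of_sub_mul_eq hZω⟩
  · simp [lagrangian, optimalClaim, hωA, hoff hωA]

theorem integrable_utility_of_lagrangian_le {Z Z' : Ω → ℝ} (hξm : Measurable ξ)
    (hξpos : ∀ᵐ ω ∂P, 0 < ξ ω) (hu_cont : ContinuousOn u (Ici 0)) (hu_nonneg : ∀ t ≥ 0, 0 ≤ u t)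
    (hZ : Integrable (fun ω => ξ ω * Z ω) P) (hL : Integrable (lagrangian u ξ lam Z') P)
    (hle : lagrangian u ξ lam Z ≤ᵐ[P] lagrangian u ξ lam Z') :
    Integrable (fun ω => u (max (Z ω) 0)) P := by
  have hZm : AEMeasurable Z P :=
    hZ.aemeasurable.of_mul_left hξm (hξpos.mono fun _ h => h.ne')
  have hcont : Continuous fun t : ℝ => u (max t 0) :=
    hu_cont.comp_continuous (continuous_id.max continuous_const) fun t => le_max_right t 0
  refine (hL.add (hZ.const_mul lam)).mono'
    (hcont.measurable.comp_aemeasurable hZm).aestronglyMeasurable ?_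
  filter_upwards [hle] with ω hω
  rw [Real.norm_eq_abs, abs_of_nonneg (hu_nonneg _ (le_max_right _ _))]
  simp only [lagrangian, Pi.add_apply] at hω ⊢
  linarith

theorem integrable_lagrangian {Z : Ω → ℝ} (hZu : Integrable (fun ω => u (max (Z ω) 0)) P)
    (hZ : Integrable (fun ω => ξ ω * Z ω) P) : Integrable (lagrangian u ξ lam Z) P :=
  hZu.sub (hZ.const_mul lam)

theorem integral_lagrangian {Z : Ω → ℝ} (hZu : Integrable (fun ω => u (max (Z ω) 0)) P)
    (hZ : Integrable (fun ω => ξ ω * Z ω) P) :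
    ∫ ω, lagrangian u ξ lam Z ω ∂P = Uof P u Z - lam * ∫ ω, ξ ω * Z ω ∂P := by
  simp only [lagrangian]
  rw [integral_sub hZu (hZ.const_mul lam), integral_const_mul, Uof]

theorem uof_le_and_lagrangian_ae_eq {Z Z' : Ω → ℝ} (hlam : 0 ≤ lam)
    (hZu : Integrable (fun ω => u (max (Z ω) 0)) P)
    (hZ'u : Integrable (fun ω => u (max (Z' ω) 0)) P)
    (hZ : Integrable (fun ω => ξ ω * Z ω) P) (hZ' : Integrable (fun ω => ξ ω * Z' ω) P)
    (hbud : ∫ ω, ξ ω * Z ω ∂P ≤ ∫ ω, ξ ω * Z' ω ∂P)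
    (hle : lagrangian u ξ lam Z ≤ᵐ[P] lagrangian u ξ lam Z') :
    Uof P u Z ≤ Uof P u Z' ∧
      (Uof P u Z = Uof P u Z' → lagrangian u ξ lam Z =ᵐ[P] lagrangian u ξ lam Z') := by
  have hL := integrable_lagrangian (lam := lam) hZu hZ
  have hL' := integrable_lagrangian (lam := lam) hZ'u hZ'
  have hmono := integral_mono_ae hL hL' hle
  have hcost := mul_le_mul_of_nonneg_left hbud hlam
  rw [integral_lagrangian hZu hZ, integral_lagrangian hZ'u hZ'] at hmono
  refine ⟨by linarith, fun heq => (integral_eq_iff_of_ae_le hL hL' hle).1 ?_⟩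
  rw [integral_lagrangian hZu hZ, integral_lagrangian hZ'u hZ']
  linarith

end Lagrangian

theorem stmt0_general
    (P : Measure Ω)
    (ξ : Ω → ℝ) (hξm : Measurable ξ)
    (hξpos : ∀ᵐ ω ∂P, 0 < ξ ω)
    (u u' u'' : ℝ → ℝ)
    (hu_d1 : ∀ x ∈ Ici (0:ℝ), HasDerivWithinAt u (u' x) (Ici 0) x)
    (hu_d2 : ∀ x ∈ Ici (0:ℝ), HasDerivWithinAt u' (u'' x) (Ici 0) x)
    (hu_conc : StrictConcaveOn ℝ (Ici 0) u)
    (hu_mono : StrictMonoOn u (Ici 0))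
    (hu0 : u 0 = 0)
    (hu'lim : Tendsto u' atTop (nhds 0))
    (hv_int : ∀ l : ℝ, 0 < l → Integrable (fun ω => vconj u (l * ξ ω)) P)
    (I : ℝ → ℝ)
    (hI1 : ∀ y : ℝ, 0 < y → (∃ x > (0:ℝ), u' x = y) → 0 < I y ∧ u' (I y) = y)
    (hI2 : ∀ y : ℝ, 0 < y → (∀ x > (0:ℝ), u' x < y) → I y = 0)
    (A : Set Ω) (hA : MeasurableSet A)
    (xp : ℝ) (hxp : 0 < xp)
    (lam : ℝ) (hlam : 0 < lam)
    (hbud : (∫ ω, ξ ω * A.indicator (fun ω' => I (lam * ξ ω')) ω ∂P) = xp) :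
    A.indicator (fun ω => I (lam * ξ ω)) ∈ H1 P ξ A xp ∧
    (∀ Z ∈ H1 P ξ A xp, Uof P u Z ≤ Uof P u (A.indicator fun ω => I (lam * ξ ω))) ∧
    (∀ Z ∈ H1 P ξ A xp,
      Uof P u Z = Uof P u (A.indicator fun ω => I (lam * ξ ω)) →
      Z =ᵐ[P] A.indicator fun ω => I (lam * ξ ω)) := by
  have hmax := fun y (hy : 0 < y) => isUniqueMaximizer_inverse hu_d1
    (fun x hx => (hu_d2 x hx).continuousWithinAt) hu_conc hu'lim hI1 hI2 hy
  have hu_cont : ContinuousOn u (Ici 0) := fun x hx => (hu_d1 x hx).continuousWithinAt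
  have hu_nonneg : ∀ t ≥ 0, 0 ≤ u t := fun t ht =>
    hu0 ▸ hu_mono.monotoneOn self_mem_Ici ht ht
  have hint : Integrable (fun ω => ξ ω * A.indicator (fun ω' => I (lam * ξ ω')) ω) P := by
    by_contra h
    rw [integral_undef h] at hbud
    exact hxp.ne hbud
  have hmem := optimalClaim_mem_H1 hξpos hlam (fun y hy => (hmax y hy).1) hint hbud.le
  have hL : Integrable (lagrangian u ξ lam (optimalClaim I ξ lam A)) P :=
    ((hv_int lam hlam).indicator hA).congr
      (lagrangian_optimalClaim_ae_eq hξpos hlam hu0 hmax).symm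
  have hcompare := fun Z (hZ : Z ∈ H1 P ξ A xp) =>
    have hle := ae_lagrangian_le_optimalClaim hξpos hlam hmax hZ
    uof_le_and_lagrangian_ae_eq hlam.le
      (integrable_utility_of_lagrangian_le hξm hξpos hu_cont hu_nonneg hZ.1 hL
        (hle.mono fun _ h => h.1))
      (integrable_utility_of_lagrangian_le hξm hξpos hu_cont hu_nonneg hint hL
        (ae_of_all _ fun _ => le_rfl))
      hZ.1 hint (hZ.2.1.trans hbud.ge) (hle.mono fun _ h => h.1)
  refine ⟨hmem, fun Z hZ => (hcompare Z hZ).1, fun Z hZ heq => ?_⟩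
  filter_upwards [(hcompare Z hZ).2 heq, ae_lagrangian_le_optimalClaim hξpos hlam hmax hZ]
    with ω hω hle using hle.2 hω

theorem stmt0
    (P : Measure Ω) [IsProbabilityMeasure P]
    (ξ : Ω → ℝ) (hξm : Measurable ξ)
    (hξpos : ∀ᵐ ω ∂P, 0 < ξ ω)
    (hξint : Integrable ξ P) (hξ1 : (∫ ω, ξ ω ∂P) = 1)
    (u u' u'' : ℝ → ℝ)
    (hu_d1 : ∀ x ∈ Ici (0:ℝ), HasDerivWithinAt u (u' x) (Ici 0) x)
    (hu_d2 : ∀ x ∈ Ici (0:ℝ), HasDerivWithinAt u' (u'' x) (Ici 0) x)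
    (hu_conc : StrictConcaveOn ℝ (Ici 0) u)
    (hu_mono : StrictMonoOn u (Ici 0))
    (hu0 : u 0 = 0)
    (hu'lim : Tendsto u' atTop (nhds 0))
    (hv_int : ∀ l : ℝ, 0 < l → Integrable (fun ω => vconj u (l * ξ ω)) P)
    (I : ℝ → ℝ)
    (hI1 : ∀ y : ℝ, 0 < y → (∃ x > (0:ℝ), u' x = y) → 0 < I y ∧ u' (I y) = y)
    (hI2 : ∀ y : ℝ, 0 < y → (∀ x > (0:ℝ), u' x < y) → I y = 0)
    (A : Set Ω) (hA : MeasurableSet A) (hPA : 0 < P A)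
    (xp : ℝ) (hxp : 0 < xp)
    (lam : ℝ) (hlam : 0 < lam)
    (hbud : (∫ ω, ξ ω * A.indicator (fun ω' => I (lam * ξ ω')) ω ∂P) = xp) :
    A.indicator (fun ω => I (lam * ξ ω)) ∈ H1 P ξ A xp ∧
    (∀ Z ∈ H1 P ξ A xp, Uof P u Z ≤ Uof P u (A.indicator fun ω => I (lam * ξ ω))) ∧
    (∀ Z ∈ H1 P ξ A xp,
      Uof P u Z = Uof P u (A.indicator fun ω => I (lam * ξ ω)) →
      Z =ᵐ[P] A.indicator fun ω => I (lam * ξ ω)) :=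
  stmt0_general P ξ hξm hξpos u u' u'' hu_d1 hu_d2 hu_conc hu_mono hu0 hu'lim hv_int I hI1 hI2 A hA
    xp hxp lam hlam hbud
end
end

section
/- Let A ∈ 𝓕 with P(A) > 0 and let 0 ≤ x₁ < x₂. Suppose that either x₁ = 0 or there exists λ₁ > 0 with E[ξ I(λ₁ξ) 1_A] = x₁. Then U(A, x₁) < U(A, x₂), i.e., the value function x⁺ ↦ U(A, x⁺) = sup_{Z ∈ H₁(A, x⁺)} E[u(Z⁺)] is strictly increasing. -/
/-! The Fenchel inequality `u z ≤ v y + z y` for `z ≥ 0`, with equality at `z = I y`, gives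
`E[u(Z⁺)] ≤ E[1_A v(λ₁ξ)] + λ₁ x₁` for every `Z ∈ H₁(A, x₁)`, and the claim `1_A I(λ₁ξ)` attains
this bound; for `x₁ = 0` the only admissible claim is `0`. So `U(A, x₁)` is attained by some `W`,
and spending the remaining budget `x₂ - x₁` on a constant claim `c 1_A` strictly increases the
expected utility, because `u` is strictly increasing and `P(A) > 0`. -/

open MeasureTheory Set Filter
open scoped Classical ENNReal

noncomputable section

variable {Ω : Type*} [MeasurableSpace Ω]

/-- The value function `U(A, x⁺) = sup {E[u(Z⁺)] : Z ∈ H₁(A,x⁺)}`, as an extended real. -/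
def Uval (P : Measure Ω) (ξ : Ω → ℝ) (u : ℝ → ℝ) (A : Set Ω) (x : ℝ) : EReal :=
  sSup ((fun Z => ((Uof P u Z : ℝ) : EReal)) '' H1 P ξ A x)

open scoped Topology

theorem ConcaveOn.le_add_mul_sub_of_hasDerivWithinAt {S : Set ℝ} {u : ℝ → ℝ} {a b d : ℝ}
    (hc : ConcaveOn ℝ S u) (ha : a ∈ S) (hb : b ∈ S) (hd : HasDerivWithinAt u d S a) :
    u b ≤ u a + d * (b - a) := by
  rcases lt_trichotomy b a with hba | rfl | hab
  · have h := hc.le_slope_of_hasDerivWithinAt hb ha hba hd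
    rw [slope_def_field, le_div_iff₀ (sub_pos.2 hba)] at h
    linarith
  · simp
  · have h := hc.slope_le_of_hasDerivWithinAt ha hb hab hd
    rw [slope_def_field, div_le_iff₀ (sub_pos.2 hab)] at h
    linarith

theorem le_of_hasDerivWithinAt_Ici_of_forall_ne {u u' : ℝ → ℝ} {b y : ℝ}
    (hd : ∀ x ∈ Ici b, HasDerivWithinAt u (u' x) (Ici b) x)
    (hlim : ∀ᶠ t in atTop, u' t < y) (hne : ∀ x > b, u' x ≠ y) {a : ℝ} (ha : b ≤ a) :
    u' a ≤ y := by
  by_contra! hya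
  obtain ⟨t, hty, hat⟩ := (hlim.and (eventually_gt_atTop a)).exists
  have hd' : ∀ x ∈ Icc a t, HasDerivWithinAt u (u' x) (Icc a t) x := fun x hx =>
    (hd x (ha.trans hx.1)).mono fun z hz => ha.trans hz.1
  obtain ⟨c, hc, hcy⟩ := exists_hasDerivWithinAt_eq_of_lt_of_gt hat.le hd' hya hty
  exact hne c (ha.trans_lt hc.1) hcy

theorem isGreatest_vconj_set {u u' I : ℝ → ℝ}
    (hd : ∀ x ∈ Ici (0:ℝ), HasDerivWithinAt u (u' x) (Ici 0) x)
    (hc : ConcaveOn ℝ (Ici 0) u) (hlim : Tendsto u' atTop (𝓝 0))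
    (hI1 : ∀ y : ℝ, 0 < y → (∃ x > (0:ℝ), u' x = y) → 0 < I y ∧ u' (I y) = y)
    (hI2 : ∀ y : ℝ, 0 < y → (∀ x > (0:ℝ), u' x < y) → I y = 0)
    {y : ℝ} (hy : 0 < y) :
    0 ≤ I y ∧ IsGreatest {z | ∃ x ≥ (0:ℝ), z = u x - x * y} (u (I y) - I y * y) := by
  by_cases hattained : ∃ x > (0:ℝ), u' x = y
  · obtain ⟨hIpos, hIy⟩ := hI1 y hy hattained
    refine ⟨hIpos.le, ⟨I y, hIpos.le, rfl⟩, ?_⟩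
    rintro _ ⟨x, hx, rfl⟩
    have := hc.le_add_mul_sub_of_hasDerivWithinAt hIpos.le hx (hd _ hIpos.le)
    rw [hIy] at this
    linarith
  · push Not at hattained
    have hle : ∀ x ≥ (0:ℝ), u' x ≤ y :=
      fun x hx => le_of_hasDerivWithinAt_Ici_of_forall_ne hd (hlim.eventually (gt_mem_nhds hy))
        hattained hx
    rw [hI2 y hy fun x hx => (hle x hx.le).lt_of_ne (hattained x hx)]
    refine ⟨le_rfl, ⟨0, le_rfl, by simp⟩, ?_⟩
    rintro _ ⟨x, hx, rfl⟩
    have := hc.le_add_mul_sub_of_hasDerivWithinAt self_mem_Ici hx (hd 0 self_mem_Ici)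
    nlinarith [hle 0 le_rfl]

section ValueFunction

variable {P : Measure Ω} {ξ : Ω → ℝ} {u v ι : ℝ → ℝ} {A : Set Ω} {x l c : ℝ} {Z W : Ω → ℝ}

theorem integral_pos_of_ae_pos_on {f : Ω → ℝ} (hf : 0 ≤ᵐ[P] f) (hfi : Integrable f P)
    (hpos : ∀ᵐ ω ∂P, ω ∈ A → 0 < f ω) (hPA : 0 < P A) : 0 < ∫ ω, f ω ∂P := by
  rw [integral_pos_iff_support_of_nonneg_ae hf hfi]
  refine hPA.trans_le (measure_mono_ae ?_)
  filter_upwards [hpos] with ω hω hωA using (hω hωA).ne'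

theorem setIntegral_pos_of_ae_pos (hξpos : ∀ᵐ ω ∂P, 0 < ξ ω) (hξint : Integrable ξ P)
    (hA : MeasurableSet A) (hPA : 0 < P A) : 0 < ∫ ω in A, ξ ω ∂P := by
  rw [← integral_indicator hA]
  refine integral_pos_of_ae_pos_on ?_ (hξint.indicator hA) ?_ hPA
  · filter_upwards [hξpos] with ω hω
    by_cases hωA : ω ∈ A <;> simp [hωA, hω.le]
  · filter_upwards [hξpos] with ω hω hωA
    rwa [indicator_of_mem hωA]

theorem aemeasurable_of_aemeasurable_mul (hξm : Measurable ξ) (hξpos : ∀ᵐ ω ∂P, 0 < ξ ω)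
    (h : AEMeasurable (fun ω => ξ ω * Z ω) P) : AEMeasurable Z P := by
  refine (h.mul hξm.inv.aemeasurable).congr ?_
  filter_upwards [hξpos] with ω hω
  simp only [Pi.mul_apply, Pi.inv_apply]
  rw [mul_right_comm, mul_inv_cancel₀ hω.ne', one_mul]

theorem zero_mem_H1 (hx : 0 ≤ x) : (0 : Ω → ℝ) ∈ H1 P ξ A x :=
  ⟨by simp, by simpa using hx, by simp, by simp⟩

theorem ae_eq_zero_of_mem_H1_zero (hξpos : ∀ᵐ ω ∂P, 0 < ξ ω) (hZ : Z ∈ H1 P ξ A 0) :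
    Z =ᵐ[P] 0 := by
  obtain ⟨hZint, hZle, hZoff, hZon⟩ := hZ
  have hnn : 0 ≤ᵐ[P] fun ω => ξ ω * Z ω := by
    filter_upwards [hξpos, hZoff, hZon] with ω hξω hoff hon
    by_cases hω : ω ∈ A
    · exact mul_nonneg hξω.le (hon hω)
    · simp [hoff hω]
  have hprod : (fun ω => ξ ω * Z ω) =ᵐ[P] 0 :=
    (integral_eq_zero_iff_of_nonneg_ae hnn hZint).1 (hZle.antisymm (integral_nonneg_of_ae hnn))
  filter_upwards [hprod, hξpos] with ω h hξω
  exact (mul_eq_zero.1 h).resolve_left hξω.ne'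

theorem add_indicator_mem_H1 (hξint : Integrable ξ P) (hA : MeasurableSet A) (hW : W ∈ H1 P ξ A x)
    (hc : 0 ≤ c) :
    W + A.indicator (fun _ => c) ∈ H1 P ξ A (x + c * ∫ ω in A, ξ ω ∂P) := by
  obtain ⟨hWint, hWle, hWoff, hWon⟩ := hW
  have hprod : (fun ω => ξ ω * (W + A.indicator (fun _ => c)) ω)
      = fun ω => ξ ω * W ω + A.indicator (fun ω => c * ξ ω) ω := by
    ext ω
    by_cases hω : ω ∈ A <;> simp [hω, mul_add, mul_comm]
  have hcξ : Integrable (A.indicator fun ω => c * ξ ω) P := (hξint.const_mul c).indicator hA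
  refine ⟨?_, ?_, ?_, ?_⟩
  · rw [hprod]
    exact hWint.add hcξ
  · rw [hprod, integral_add hWint hcξ, integral_indicator hA, integral_const_mul]
    linarith
  · filter_upwards [hWoff] with ω hoff hω
    simp [hoff hω, hω]
  · filter_upwards [hWon] with ω hon hω
    simpa [hω] using add_nonneg (hon hω) hc

theorem ae_le_indicator_add_of_mem_H1 (hξpos : ∀ᵐ ω ∂P, 0 < ξ ω)
    (hu_mono : MonotoneOn u (Ici 0)) (hu0 : u 0 = 0)
    (hv : ∀ y > 0, ∀ z ≥ 0, u z - z * y ≤ v y) (hl : 0 < l) (hZ : Z ∈ H1 P ξ A x) :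
    ∀ᵐ ω ∂P, 0 ≤ u (max (Z ω) 0) ∧
      u (max (Z ω) 0) ≤ A.indicator (fun ω => v (l * ξ ω)) ω + l * (ξ ω * Z ω) := by
  filter_upwards [hξpos, hZ.2.2.1, hZ.2.2.2] with ω hξω hoff hon
  by_cases hω : ω ∈ A
  · have hZω := hon hω
    rw [max_eq_left hZω, indicator_of_mem hω]
    refine ⟨hu0 ▸ hu_mono self_mem_Ici hZω hZω, ?_⟩
    have := hv _ (mul_pos hl hξω) _ hZω
    linarith
  · simp [hoff hω, hω, hu0]

theorem integrable_comp_max_of_mem_H1 (hξm : Measurable ξ) (hξpos : ∀ᵐ ω ∂P, 0 < ξ ω)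
    (hu_mono : MonotoneOn u (Ici 0)) (hu0 : u 0 = 0)
    (hv : ∀ y > 0, ∀ z ≥ 0, u z - z * y ≤ v y) (hl : 0 < l) (hA : MeasurableSet A)
    (hvint : Integrable (fun ω => v (l * ξ ω)) P) (hZ : Z ∈ H1 P ξ A x) :
    Integrable (fun ω => u (max (Z ω) 0)) P := by
  have hmono : Monotone fun t : ℝ => u (max t 0) := fun s t hst =>
    hu_mono (le_max_right s 0) (le_max_right t 0) (max_le_max_right 0 hst)
  have hZm : AEMeasurable Z P :=
    aemeasurable_of_aemeasurable_mul hξm hξpos hZ.1.aestronglyMeasurable.aemeasurable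
  refine Integrable.mono' ((hvint.indicator hA).add (hZ.1.const_mul l))
    (hmono.measurable.comp_aemeasurable hZm).aestronglyMeasurable ?_
  filter_upwards [ae_le_indicator_add_of_mem_H1 hξpos hu_mono hu0 hv hl hZ] with ω h
  rw [Real.norm_eq_abs, abs_of_nonneg h.1]
  exact h.2

theorem Uof_le_of_mem_H1 (hξm : Measurable ξ) (hξpos : ∀ᵐ ω ∂P, 0 < ξ ω)
    (hu_mono : MonotoneOn u (Ici 0)) (hu0 : u 0 = 0)
    (hv : ∀ y > 0, ∀ z ≥ 0, u z - z * y ≤ v y) (hl : 0 < l) (hA : MeasurableSet A)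
    (hvint : Integrable (fun ω => v (l * ξ ω)) P) (hZ : Z ∈ H1 P ξ A x) :
    Uof P u Z ≤ (∫ ω in A, v (l * ξ ω) ∂P) + l * x := by
  have hbound : Uof P u Z ≤
      ∫ ω, A.indicator (fun ω => v (l * ξ ω)) ω + l * (ξ ω * Z ω) ∂P := integral_mono_ae
    (integrable_comp_max_of_mem_H1 hξm hξpos hu_mono hu0 hv hl hA hvint hZ)
    ((hvint.indicator hA).add (hZ.1.const_mul l))
    ((ae_le_indicator_add_of_mem_H1 hξpos hu_mono hu0 hv hl hZ).mono fun _ h => h.2)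
  rw [integral_add (hvint.indicator hA) (hZ.1.const_mul l), integral_indicator hA,
    integral_const_mul] at hbound
  exact hbound.trans (by gcongr; exact hZ.2.1)

theorem Uval_eq_of_isMaxOn (hW : W ∈ H1 P ξ A x) (hmax : IsMaxOn (Uof P u) (H1 P ξ A x) W) :
    Uval P ξ u A x = Uof P u W := by
  refine IsGreatest.csSup_eq ⟨mem_image_of_mem _ hW, ?_⟩
  rintro _ ⟨Z, hZ, rfl⟩
  exact EReal.coe_le_coe_iff.2 (hmax hZ)

theorem isMaxOn_zero_H1_zero (hξpos : ∀ᵐ ω ∂P, 0 < ξ ω) :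
    IsMaxOn (Uof P u) (H1 P ξ A 0) 0 := by
  intro Z hZ
  refine le_of_eq (integral_congr_ae (f := fun ω => u (max (Z ω) 0)) ?_)
  filter_upwards [ae_eq_zero_of_mem_H1_zero hξpos hZ] with ω hω
  simp [hω]

theorem isMaxOn_indicator (hξm : Measurable ξ) (hξpos : ∀ᵐ ω ∂P, 0 < ξ ω)
    (hu_mono : MonotoneOn u (Ici 0)) (hu0 : u 0 = 0)
    (hv : ∀ y > 0, ∀ z ≥ 0, u z - z * y ≤ v y)
    (hι : ∀ y > 0, 0 ≤ ι y ∧ u (ι y) - ι y * y = v y) (hl : 0 < l) (hA : MeasurableSet A)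
    (hvint : Integrable (fun ω => v (l * ξ ω)) P)
    (hWint : Integrable (fun ω => ξ ω * A.indicator (fun ω => ι (l * ξ ω)) ω) P)
    (hx : ∫ ω, ξ ω * A.indicator (fun ω => ι (l * ξ ω)) ω ∂P = x) :
    A.indicator (fun ω => ι (l * ξ ω)) ∈ H1 P ξ A x ∧
      IsMaxOn (Uof P u) (H1 P ξ A x) (A.indicator fun ω => ι (l * ξ ω)) := by
  have hmem : A.indicator (fun ω => ι (l * ξ ω)) ∈ H1 P ξ A x := by
    refine ⟨hWint, hx.le, ae_of_all _ fun ω hω => indicator_of_notMem hω _, ?_⟩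
    filter_upwards [hξpos] with ω hξω hω
    rw [indicator_of_mem hω]
    exact (hι _ (mul_pos hl hξω)).1
  have hequality : Uof P u (A.indicator fun ω => ι (l * ξ ω)) =
      ∫ ω, A.indicator (fun ω => v (l * ξ ω)) ω +
        l * (ξ ω * A.indicator (fun ω => ι (l * ξ ω)) ω) ∂P := by
    refine integral_congr_ae ?_
    filter_upwards [hξpos] with ω hξω
    by_cases hω : ω ∈ A
    · obtain ⟨hι0, hιv⟩ := hι _ (mul_pos hl hξω)
      simp only [indicator_of_mem hω, max_eq_left hι0, ← hιv]
      ring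
    · simp [hω, hu0]
  refine ⟨hmem, fun Z hZ => ?_⟩
  rw [Set.mem_ofPred_eq, hequality, integral_add (hvint.indicator hA) (hWint.const_mul l),
    integral_indicator hA, integral_const_mul, hx]
  exact Uof_le_of_mem_H1 hξm hξpos hu_mono hu0 hv hl hA hvint hZ

theorem exists_isMaxOn_H1 (hξm : Measurable ξ) (hξpos : ∀ᵐ ω ∂P, 0 < ξ ω)
    (hu_mono : MonotoneOn u (Ici 0)) (hu0 : u 0 = 0)
    (hv : ∀ y > 0, ∀ z ≥ 0, u z - z * y ≤ v y)
    (hι : ∀ y > 0, 0 ≤ ι y ∧ u (ι y) - ι y * y = v y) (hA : MeasurableSet A)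
    (hvint : ∀ l : ℝ, 0 < l → Integrable (fun ω => v (l * ξ ω)) P)
    (hsol : x = 0 ∨ ∃ l : ℝ, 0 < l ∧
      ∫ ω, ξ ω * A.indicator (fun ω => ι (l * ξ ω)) ω ∂P = x) :
    ∃ W ∈ H1 P ξ A x, IsMaxOn (Uof P u) (H1 P ξ A x) W := by
  have hzero : ∃ W ∈ H1 P ξ A 0, IsMaxOn (Uof P u) (H1 P ξ A 0) W :=
    ⟨0, zero_mem_H1 le_rfl, isMaxOn_zero_H1_zero hξpos⟩
  rcases hsol with rfl | ⟨l, hl, hx⟩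
  · exact hzero
  by_cases hWint : Integrable (fun ω => ξ ω * A.indicator (fun ω => ι (l * ξ ω)) ω) P
  · exact ⟨_, isMaxOn_indicator hξm hξpos hu_mono hu0 hv hι hl hA (hvint l hl) hWint hx⟩
  -- otherwise the integral in `hx` is the junk value `0`, so this is again the case `x = 0`
  · rw [← hx, integral_undef hWint]
    exact hzero

theorem Uof_lt_Uof_add_indicator (hu : StrictMonoOn u (Ici 0)) (hW : W ∈ H1 P ξ A x) (hc : 0 < c)
    (hPA : 0 < P A) (hWi : Integrable (fun ω => u (max (W ω) 0)) P)
    (hZi : Integrable (fun ω => u (max ((W + A.indicator fun _ => c) ω) 0)) P) :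
    Uof P u W < Uof P u (W + A.indicator fun _ => c) := by
  have hgain : ∀ᵐ ω ∂P, ω ∈ A →
      u (max (W ω) 0) < u (max ((W + A.indicator fun _ => c) ω) 0) := by
    filter_upwards [hW.2.2.2] with ω hon hω
    have hWω := hon hω
    rw [Pi.add_apply, indicator_of_mem hω, max_eq_left hWω, max_eq_left (by linarith)]
    exact hu hWω (mem_Ici.2 (by linarith)) (by linarith)
  rw [← sub_pos, Uof, Uof, ← integral_sub hZi hWi]
  refine integral_pos_of_ae_pos_on ?_ (hZi.sub hWi) ?_ hPA
  · filter_upwards [hgain] with ω hω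
    by_cases hωA : ω ∈ A
    · exact sub_nonneg.2 (hω hωA).le
    · simp [hωA]
  · filter_upwards [hgain] with ω hω hωA using sub_pos.2 (hω hωA)

end ValueFunction

theorem stmt1_general
    (P : Measure Ω)
    (ξ : Ω → ℝ) (hξm : Measurable ξ)
    (hξpos : ∀ᵐ ω ∂P, 0 < ξ ω)
    (hξint : Integrable ξ P)
    (u u' : ℝ → ℝ)
    (hu_d1 : ∀ x ∈ Ici (0:ℝ), HasDerivWithinAt u (u' x) (Ici 0) x)
    (hu_conc : StrictConcaveOn ℝ (Ici 0) u)
    (hu_mono : StrictMonoOn u (Ici 0))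
    (hu0 : u 0 = 0)
    (hu'lim : Tendsto u' atTop (nhds 0))
    (hv_int : ∀ l : ℝ, 0 < l → Integrable (fun ω => vconj u (l * ξ ω)) P)
    (I : ℝ → ℝ)
    (hI1 : ∀ y : ℝ, 0 < y → (∃ x > (0:ℝ), u' x = y) → 0 < I y ∧ u' (I y) = y)
    (hI2 : ∀ y : ℝ, 0 < y → (∀ x > (0:ℝ), u' x < y) → I y = 0)
    (A : Set Ω) (hA : MeasurableSet A) (hPA : 0 < P A)
    (x1 x2 : ℝ) (h12 : x1 < x2)
    (hsol : x1 = 0 ∨ ∃ l : ℝ, 0 < l ∧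
      (∫ ω, ξ ω * A.indicator (fun ω' => I (l * ξ ω')) ω ∂P) = x1) :
    Uval P ξ u A x1 < Uval P ξ u A x2 := by
  have hconj y (hy : 0 < y) := isGreatest_vconj_set hu_d1 hu_conc.concaveOn hu'lim hI1 hI2 hy
  have hv : ∀ y > 0, ∀ z ≥ 0, u z - z * y ≤ vconj u y := fun y hy z hz =>
    ((hconj y hy).2.2 ⟨z, hz, rfl⟩).trans_eq (hconj y hy).2.csSup_eq.symm
  have hι : ∀ y > 0, 0 ≤ I y ∧ u (I y) - I y * y = vconj u y := fun y hy =>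
    ⟨(hconj y hy).1, (hconj y hy).2.csSup_eq.symm⟩
  have hint {x : ℝ} {Z : Ω → ℝ} (hZ : Z ∈ H1 P ξ A x) :=
    integrable_comp_max_of_mem_H1 hξm hξpos hu_mono.monotoneOn hu0 hv one_pos hA
      (hv_int 1 one_pos) hZ
  obtain ⟨W, hW, hmax⟩ := exists_isMaxOn_H1 hξm hξpos hu_mono.monotoneOn hu0 hv hι hA hv_int hsol
  have hAξ := setIntegral_pos_of_ae_pos hξpos hξint hA hPA
  set c := (x2 - x1) / ∫ ω in A, ξ ω ∂P
  have hc : 0 < c := div_pos (sub_pos.2 h12) hAξ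
  have hZ : W + A.indicator (fun _ => c) ∈ H1 P ξ A x2 := by
    have := add_indicator_mem_H1 hξint hA hW hc.le
    rwa [div_mul_cancel₀ _ hAξ.ne', add_sub_cancel] at this
  rw [Uval_eq_of_isMaxOn hW hmax]
  calc ((Uof P u W : ℝ) : EReal) < ((Uof P u (W + A.indicator fun _ => c) : ℝ) : EReal) :=
        EReal.coe_lt_coe_iff.2 (Uof_lt_Uof_add_indicator hu_mono hW hc hPA (hint hW) (hint hZ))
    _ ≤ Uval P ξ u A x2 := le_sSup ⟨_, hZ, rfl⟩

theorem stmt1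
    (P : Measure Ω) [IsProbabilityMeasure P]
    (ξ : Ω → ℝ) (hξm : Measurable ξ)
    (hξpos : ∀ᵐ ω ∂P, 0 < ξ ω)
    (hξint : Integrable ξ P) (hξ1 : (∫ ω, ξ ω ∂P) = 1)
    (u u' u'' : ℝ → ℝ)
    (hu_d1 : ∀ x ∈ Ici (0:ℝ), HasDerivWithinAt u (u' x) (Ici 0) x)
    (hu_d2 : ∀ x ∈ Ici (0:ℝ), HasDerivWithinAt u' (u'' x) (Ici 0) x)
    (hu_conc : StrictConcaveOn ℝ (Ici 0) u)
    (hu_mono : StrictMonoOn u (Ici 0))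
    (hu0 : u 0 = 0)
    (hu'lim : Tendsto u' atTop (nhds 0))
    (hv_int : ∀ l : ℝ, 0 < l → Integrable (fun ω => vconj u (l * ξ ω)) P)
    (I : ℝ → ℝ)
    (hI1 : ∀ y : ℝ, 0 < y → (∃ x > (0:ℝ), u' x = y) → 0 < I y ∧ u' (I y) = y)
    (hI2 : ∀ y : ℝ, 0 < y → (∀ x > (0:ℝ), u' x < y) → I y = 0)
    (A : Set Ω) (hA : MeasurableSet A) (hPA : 0 < P A)
    (x1 x2 : ℝ) (hx1 : 0 ≤ x1) (h12 : x1 < x2)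
    (hsol : x1 = 0 ∨ ∃ l : ℝ, 0 < l ∧
      (∫ ω, ξ ω * A.indicator (fun ω' => I (l * ξ ω')) ω ∂P) = x1) :
    Uval P ξ u A x1 < Uval P ξ u A x2 :=
  stmt1_general P ξ hξm hξpos hξint u u' hu_d1 hu_conc hu_mono hu0 hu'lim hv_int I hI1 hI2 A hA hPA
    x1 x2 h12 hsol
end
end

section
/- Assume ρ₀ > ρ(0) and inf_{A ∈ 𝓕} Δ(A) > −∞. Then sup_{X ∈ H} E[u(X⁺)] = sup_{A ∈ 𝓕} U(A, x⁺(A)) and this common value is finite. -/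
open MeasureTheory Set Filter
open scoped Classical ENNReal

noncomputable section

variable {Ω : Type*} [MeasurableSpace Ω]

/-- The set `H₂(A)`. -/
def H2 (P : Measure Ω) (ξ : Ω → ℝ) (ρ : (Ω → ℝ) → EReal) (ρ₀ : ℝ) (A : Set Ω) :
    Set (Ω → ℝ) :=
  {Y | Integrable (fun ω => ξ ω * Y ω) P ∧ ρ Y ≤ (ρ₀ : EReal) ∧
    (∀ᵐ ω ∂P, ω ∈ A → Y ω = 0) ∧ (∀ᵐ ω ∂P, ω ∉ A → Y ω ≤ 0)}

/-- The set of values `{E[ξ Y] : Y ∈ H₂(A)}`; `Δ(A)` is its infimum. -/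
def DSet (P : Measure Ω) (ξ : Ω → ℝ) (ρ : (Ω → ℝ) → EReal) (ρ₀ : ℝ) (A : Set Ω) : Set ℝ :=
  (fun Y => ∫ ω, ξ ω * Y ω ∂P) '' H2 P ξ ρ ρ₀ A

/-- The admissible set `H = {X : E[ξX] ≤ x₀, ρ(-X⁻) ≤ ρ₀}` (note `-X⁻ = min X 0`). -/
def Hset (P : Measure Ω) (ξ : Ω → ℝ) (ρ : (Ω → ℝ) → EReal) (ρ₀ x₀ : ℝ) : Set (Ω → ℝ) :=
  {X | Integrable (fun ω => ξ ω * X ω) P ∧ (∫ ω, ξ ω * X ω ∂P) ≤ x₀ ∧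
    ρ (fun ω => min (X ω) 0) ≤ (ρ₀ : EReal)}


/-- Tangent line bound for a concave function on `Ici 0`. -/
lemma tangent_bound {u u' : ℝ → ℝ}
    (hu_d1 : ∀ x ∈ Ici (0:ℝ), HasDerivWithinAt u (u' x) (Ici 0) x)
    (hconc : ConcaveOn ℝ (Ici 0) u) {x₁ : ℝ} (hx₁ : 0 ≤ x₁) :
    ∀ x ≥ (0:ℝ), u x ≤ u x₁ + u' x₁ * (x - x₁) := by
  intro x hx
  rcases lt_trichotomy x x₁ with h | h | h
  · have hs := hconc.le_slope_of_hasDerivWithinAt (mem_Ici.mpr hx) (mem_Ici.mpr hx₁) h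
      (hu_d1 x₁ hx₁)
    rw [slope_def_field, le_div_iff₀ (by linarith : (0:ℝ) < x₁ - x)] at hs
    nlinarith
  · subst h; simp
  · have hs := hconc.slope_le_of_hasDerivWithinAt (mem_Ici.mpr hx₁) (mem_Ici.mpr hx) h
      (hu_d1 x₁ hx₁)
    rw [slope_def_field, div_le_iff₀ (by linarith : (0:ℝ) < x - x₁)] at hs
    nlinarith

lemma vconj_bound {u u' : ℝ → ℝ}
    (hu_d1 : ∀ x ∈ Ici (0:ℝ), HasDerivWithinAt u (u' x) (Ici 0) x)
    (hconc : ConcaveOn ℝ (Ici 0) u) (hu0 : u 0 = 0)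
    (hu'lim : Tendsto u' atTop (nhds 0)) {y : ℝ} (hy : 0 < y) :
    (∀ x, 0 ≤ x → u x - x * y ≤ vconj u y) ∧ 0 ≤ vconj u y := by
  obtain ⟨N, hN⟩ := eventually_atTop.mp (hu'lim.eventually_lt_const hy)
  set x₁ := max N 0 with hx₁def
  have hx₁0 : (0:ℝ) ≤ x₁ := le_max_right _ _
  have hu'x₁ : u' x₁ < y := hN x₁ (le_max_left _ _)
  have htan := tangent_bound hu_d1 hconc hx₁0
  have hbdd : BddAbove {z | ∃ x ≥ (0:ℝ), z = u x - x * y} := by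
    refine ⟨u x₁ - u' x₁ * x₁, ?_⟩
    rintro z ⟨x, hx, rfl⟩
    have := htan x hx
    nlinarith
  refine ⟨fun x hx => le_csSup hbdd ⟨x, hx, rfl⟩, ?_⟩
  have h0 : (0:ℝ) ∈ {z | ∃ x ≥ (0:ℝ), z = u x - x * y} := ⟨0, le_refl 0, by simp [hu0]⟩
  exact le_csSup hbdd h0

theorem stmt5
    (P : Measure Ω) [IsProbabilityMeasure P]
    (ξ : Ω → ℝ) (hξm : Measurable ξ)
    (hξpos : ∀ᵐ ω ∂P, 0 < ξ ω)
    (hξint : Integrable ξ P) (hξ1 : (∫ ω, ξ ω ∂P) = 1)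
    (u u' u'' : ℝ → ℝ)
    (hu_d1 : ∀ x ∈ Ici (0:ℝ), HasDerivWithinAt u (u' x) (Ici 0) x)
    (hu_d2 : ∀ x ∈ Ici (0:ℝ), HasDerivWithinAt u' (u'' x) (Ici 0) x)
    (hu_conc : StrictConcaveOn ℝ (Ici 0) u)
    (hu_mono : StrictMonoOn u (Ici 0))
    (hu0 : u 0 = 0)
    (hu'lim : Tendsto u' atTop (nhds 0))
    (hv_int : ∀ l : ℝ, 0 < l → Integrable (fun ω => vconj u (l * ξ ω)) P)
    (ρ : (Ω → ℝ) → EReal)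
    (hρ_mono : ∀ X Y : Ω → ℝ, (∀ᵐ ω ∂P, X ω ≤ Y ω) → ρ Y ≤ ρ X)
    (hρ_cash : ∀ (X : Ω → ℝ) (m : ℝ), ρ (fun ω => X ω + m) = ρ X - (m : EReal))
    (hρ_conv : ∀ (X Y : Ω → ℝ) (t : ℝ), 0 ≤ t → t ≤ 1 →
      ρ (fun ω => t * X ω + (1 - t) * Y ω) ≤ (t : EReal) * ρ X + ((1 - t : ℝ) : EReal) * ρ Y)
    (hρ_law : ∀ X Y : Ω → ℝ, Measure.map X P = Measure.map Y P → ρ X = ρ Y)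
    (x₀ ρ₀ : ℝ) (hx₀ : 0 ≤ x₀)
    (hρ₀ : ρ (fun _ => (0:ℝ)) < (ρ₀ : EReal))
    (hΔ : BddBelow (⋃ (A : Set Ω) (_ : MeasurableSet A), DSet P ξ ρ ρ₀ A)) :
    (sSup ((fun X => ((Uof P u X : ℝ) : EReal)) '' Hset P ξ ρ ρ₀ x₀)
      = ⨆ (A : Set Ω) (_ : MeasurableSet A),
          Uval P ξ u A (x₀ - sInf (DSet P ξ ρ ρ₀ A))) ∧
    sSup ((fun X => ((Uof P u X : ℝ) : EReal)) '' Hset P ξ ρ ρ₀ x₀) ≠ ⊤ ∧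
    sSup ((fun X => ((Uof P u X : ℝ) : EReal)) '' Hset P ξ ρ ρ₀ x₀) ≠ ⊥ := by
  classical
  -- basic facts about u
  have hconc : ConcaveOn ℝ (Ici 0) u := hu_conc.concaveOn
  have humono : MonotoneOn u (Ici 0) := hu_mono.monotoneOn
  have hunn : ∀ x : ℝ, 0 ≤ x → 0 ≤ u x := by
    intro x hx
    have := humono (mem_Ici.mpr le_rfl) (mem_Ici.mpr hx) hx
    simpa [hu0] using this
  have hucontOn : ContinuousOn u (Ici 0) := fun x hx => (hu_d1 x hx).continuousWithinAt
  have hucont : Continuous (fun x : ℝ => u (max x 0)) :=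
    hucontOn.comp_continuous (continuous_id.max continuous_const)
      (fun x => mem_Ici.mpr (le_max_right _ _))
  have hv : ∀ y : ℝ, 0 < y → (∀ x, 0 ≤ x → u x - x * y ≤ vconj u y) ∧ 0 ≤ vconj u y :=
    fun y hy => vconj_bound hu_d1 hconc hu0 hu'lim hy
  -- a.e. measurability
  have haemX : ∀ X : Ω → ℝ, Integrable (fun ω => ξ ω * X ω) P → AEMeasurable X P := by
    intro X h
    have h1 : AEMeasurable (fun ω => (ξ ω)⁻¹ * (ξ ω * X ω)) P :=
      (hξm.aemeasurable.inv).mul h.aemeasurable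
    refine h1.congr ?_
    filter_upwards [hξpos] with ω hω
    rw [inv_mul_cancel_left₀ hω.ne']
  -- ρ respects a.e. equality
  have haeρ : ∀ f g : Ω → ℝ, f =ᵐ[P] g → ρ f = ρ g := fun f g h =>
    le_antisymm (hρ_mono g f h.symm.le) (hρ_mono f g h.le)
  have hρ0' : ρ (fun _ => (0:ℝ)) ≤ (ρ₀ : EReal) := hρ₀.le
  have hH2zero : ∀ A : Set Ω, (fun _ : Ω => (0:ℝ)) ∈ H2 P ξ ρ ρ₀ A := by
    intro A
    refine ⟨by simpa using (integrable_const (0:ℝ) : Integrable _ P), hρ0', ?_, ?_⟩ <;>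
      · filter_upwards with ω _; simp
  have h0D : ∀ A : Set Ω, (0:ℝ) ∈ DSet P ξ ρ ρ₀ A := fun A => ⟨fun _ => 0, hH2zero A, by simp⟩
  obtain ⟨m₀, hm₀⟩ := hΔ
  set m := min m₀ 0 with hmdef
  have hm0 : m ≤ 0 := min_le_right _ _
  have hmle : ∀ A : Set Ω, MeasurableSet A → ∀ r ∈ DSet P ξ ρ ρ₀ A, m ≤ r := by
    intro A hA r hr
    exact le_trans (min_le_left _ _) (hm₀ (mem_iUnion₂.mpr ⟨A, hA, hr⟩))
  have hbbA : ∀ A : Set Ω, MeasurableSet A → BddBelow (DSet P ξ ρ ρ₀ A) :=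
    fun A hA => ⟨m, fun r hr => hmle A hA r hr⟩
  have hdle0 : ∀ A : Set Ω, MeasurableSet A → sInf (DSet P ξ ρ ρ₀ A) ≤ 0 :=
    fun A hA => csInf_le (hbbA A hA) (h0D A)
  have hdgem : ∀ A : Set Ω, MeasurableSet A → m ≤ sInf (DSet P ξ ρ ρ₀ A) :=
    fun A hA => le_csInf ⟨0, h0D A⟩ (hmle A hA)
  -- key decomposition of elements of Hset
  have hkey : ∀ X ∈ Hset P ξ ρ ρ₀ x₀, ∃ A : Set Ω, MeasurableSet A ∧
      (fun ω => max (X ω) 0) ∈ H1 P ξ A (x₀ - sInf (DSet P ξ ρ ρ₀ A)) := by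
    rintro X ⟨hXint, hXle, hXρ⟩
    have haeX := haemX X hXint
    have hXX' : X =ᵐ[P] haeX.mk X := haeX.ae_eq_mk
    set X' := haeX.mk X with hX'def
    set A := {ω | 0 ≤ X' ω} with hAdef
    have hA : MeasurableSet A := measurableSet_le measurable_const haeX.measurable_mk
    set Z := fun ω => max (X ω) 0 with hZdef
    set Y := fun ω => min (X ω) 0 with hYdef
    have hZint : Integrable (fun ω => ξ ω * Z ω) P := by
      refine (hXint.pos_part).congr ?_
      filter_upwards [hξpos] with ω hω
      rw [hZdef, mul_max_of_nonneg _ _ hω.le, mul_zero]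
    have hYint : Integrable (fun ω => ξ ω * Y ω) P := by
      have h1 : Integrable (fun ω => ξ ω * X ω - max (ξ ω * X ω) 0) P :=
        hXint.sub hXint.pos_part
      refine h1.congr ?_
      filter_upwards [hξpos] with ω hω
      rw [hYdef, mul_min_of_nonneg _ _ hω.le, mul_zero]
      have := min_add_max (ξ ω * X ω) (0:ℝ)
      linarith
    have hYH2 : Y ∈ H2 P ξ ρ ρ₀ A := by
      refine ⟨hYint, hXρ, ?_, ?_⟩
      · filter_upwards [hXX'] with ω hω hmem
        have hx : (0:ℝ) ≤ X ω := by rw [hω]; exact hmem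
        simp [hYdef, min_eq_right hx]
      · filter_upwards with ω _
        exact min_le_right _ _
    have hYD : (∫ ω, ξ ω * Y ω ∂P) ∈ DSet P ξ ρ ρ₀ A := ⟨Y, hYH2, rfl⟩
    have hsplit : (∫ ω, ξ ω * X ω ∂P) = (∫ ω, ξ ω * Z ω ∂P) + ∫ ω, ξ ω * Y ω ∂P := by
      rw [← integral_add hZint hYint]
      refine integral_congr_ae ?_
      filter_upwards with ω
      have hzy : Z ω + Y ω = X ω := by
        have := min_add_max (X ω) (0:ℝ)
        simp only [hZdef, hYdef]
        linarith
      rw [← hzy, mul_add]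
    refine ⟨A, hA, hZint, ?_, ?_, ?_⟩
    · have h1 : sInf (DSet P ξ ρ ρ₀ A) ≤ ∫ ω, ξ ω * Y ω ∂P := csInf_le (hbbA A hA) hYD
      linarith
    · filter_upwards [hXX'] with ω hω hnot
      have hlt : X' ω < 0 := not_le.mp hnot
      have hx : X ω < 0 := by rw [hω]; exact hlt
      simp [hZdef, max_eq_right hx.le]
    · filter_upwards with ω _
      exact le_max_right _ _
  have hvint1 : Integrable (fun ω => vconj u (ξ ω)) P := by simpa using hv_int 1 one_pos
  -- uniform upper bound
  set C : ℝ := (∫ ω, vconj u (ξ ω) ∂P) + (x₀ - m) with hCdef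
  have hbound : ∀ X ∈ Hset P ξ ρ ρ₀ x₀, Uof P u X ≤ C := by
    intro X hX
    obtain ⟨A, hA, hZH1⟩ := hkey X hX
    obtain ⟨hZint, hZle, -, -⟩ := hZH1
    have hZle' : (∫ ω, ξ ω * max (X ω) 0 ∂P) ≤ x₀ - m := by
      have := hdgem A hA
      linarith
    have haeX := haemX X hX.1
    have hfm : AEStronglyMeasurable (fun ω => u (max (X ω) 0)) P :=
      (hucont.measurable.comp_aemeasurable haeX).aestronglyMeasurable
    have hg : Integrable (fun ω => vconj u (ξ ω) + ξ ω * max (X ω) 0) P := hvint1.add hZint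
    have hptw : ∀ᵐ ω ∂P, u (max (X ω) 0) ≤ vconj u (ξ ω) + ξ ω * max (X ω) 0 := by
      filter_upwards [hξpos] with ω hω
      have h := (hv (ξ ω) hω).1 (max (X ω) 0) (le_max_right _ _)
      have hc : max (X ω) 0 * ξ ω = ξ ω * max (X ω) 0 := mul_comm _ _
      linarith
    have hfint : Integrable (fun ω => u (max (X ω) 0)) P := by
      refine hg.mono' hfm ?_
      filter_upwards [hptw] with ω h1
      rw [Real.norm_eq_abs, abs_of_nonneg (hunn _ (le_max_right _ _))]
      exact h1
    calc Uof P u X = ∫ ω, u (max (X ω) 0) ∂P := rfl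
      _ ≤ ∫ ω, (vconj u (ξ ω) + ξ ω * max (X ω) 0) ∂P := integral_mono_ae hfint hg hptw
      _ = (∫ ω, vconj u (ξ ω) ∂P) + ∫ ω, ξ ω * max (X ω) 0 ∂P := integral_add hvint1 hZint
      _ ≤ C := by rw [hCdef]; linarith
  set S : EReal := sSup ((fun X => ((Uof P u X : ℝ) : EReal)) '' Hset P ξ ρ ρ₀ x₀) with hSdef
  have h0H : (fun _ : Ω => (0:ℝ)) ∈ Hset P ξ ρ ρ₀ x₀ := by
    refine ⟨by simpa using (integrable_const (0:ℝ) : Integrable _ P), by simpa using hx₀, ?_⟩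
    simp only [min_self]
    exact hρ0'
  have hU0 : Uof P u (fun _ : Ω => (0:ℝ)) = 0 := by simp [Uof, hu0]
  have hS0 : ((0:ℝ) : EReal) ≤ S := le_sSup ⟨_, h0H, by simp only [hU0]⟩
  have hSC : S ≤ ((C : ℝ) : EReal) := by
    refine sSup_le ?_
    rintro e ⟨X, hX, rfl⟩
    exact EReal.coe_le_coe_iff.mpr (hbound X hX)
  have hSnetop : S ≠ ⊤ := ne_top_of_le_ne_top (EReal.coe_ne_top C) hSC
  have hSnebot : S ≠ ⊥ := by
    intro h
    rw [h] at hS0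
    exact absurd hS0 (by simp)
  refine ⟨le_antisymm ?_ ?_, hSnetop, hSnebot⟩
  · -- LHS ≤ RHS
    refine sSup_le ?_
    rintro e ⟨X, hX, rfl⟩
    obtain ⟨A, hA, hZH1⟩ := hkey X hX
    have hUeq : Uof P u X = Uof P u (fun ω => max (X ω) 0) := by
      have hmm : ∀ ω, max (max (X ω) 0) 0 = max (X ω) 0 :=
        fun ω => max_eq_left (le_max_right _ _)
      simp only [Uof, hmm]
    calc ((Uof P u X : ℝ) : EReal)
        = ((Uof P u (fun ω => max (X ω) 0) : ℝ) : EReal) := by rw [hUeq]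
      _ ≤ Uval P ξ u A (x₀ - sInf (DSet P ξ ρ ρ₀ A)) := le_sSup ⟨_, hZH1, rfl⟩
      _ ≤ ⨆ (A : Set Ω) (_ : MeasurableSet A), Uval P ξ u A (x₀ - sInf (DSet P ξ ρ ρ₀ A)) :=
          le_iSup₂ (f := fun (A : Set Ω) (_ : MeasurableSet A) =>
            Uval P ξ u A (x₀ - sInf (DSet P ξ ρ ρ₀ A))) A hA
  · -- RHS ≤ LHS
    refine iSup₂_le ?_
    intro A hA
    refine sSup_le ?_
    rintro e ⟨Z, hZmem, rfl⟩
    show ((Uof P u Z : ℝ) : EReal) ≤ S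
    obtain ⟨hZint, hZle, hZoff, hZon⟩ := hZmem
    set d := sInf (DSet P ξ ρ ρ₀ A) with hddef
    by_cases hint : Integrable (fun ω => u (max (Z ω) 0)) P
    swap
    · have hUZ : Uof P u Z = 0 := integral_undef hint
      rw [hUZ]
      exact hS0
    have hc0 : 0 ≤ Uof P u Z := integral_nonneg fun ω => hunn _ (le_max_right _ _)
    have hSeq : S = ((S.toReal : ℝ) : EReal) := (EReal.coe_toReal hSnetop hSnebot).symm
    have haeZ := haemX Z hZint
    have hts : ∀ t : ℝ, 0 < t → t < 1 → t * Uof P u Z ≤ S.toReal := by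
      intro t ht0 ht1
      have hxp : 0 ≤ x₀ - d := by
        have := hdle0 A hA
        linarith
      obtain ⟨Y, hYH2, hYle⟩ : ∃ Y ∈ H2 P ξ ρ ρ₀ A,
          (∫ ω, ξ ω * Y ω ∂P) ≤ d + (1 - t) * (x₀ - d) := by
        rcases eq_or_lt_of_le hxp with heq | hlt
        · refine ⟨fun _ => 0, hH2zero A, ?_⟩
          have hd0' : 0 ≤ d := by linarith
          have : d + (1 - t) * (x₀ - d) = d := by rw [← heq]; ring
          rw [this]
          simpa using hd0'
        · have hlt' : d < d + (1 - t) * (x₀ - d) := by nlinarith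
          obtain ⟨r, ⟨Y, hY, rfl⟩, hr⟩ := exists_lt_of_csInf_lt ⟨0, h0D A⟩ hlt'
          exact ⟨Y, hY, hr.le⟩
      obtain ⟨hYint, hYρ, hYonA, hYoffA⟩ := hYH2
      set X := fun ω => t * Z ω + Y ω with hXdef
      have hXrw : (fun ω => ξ ω * X ω) = fun ω => t * (ξ ω * Z ω) + ξ ω * Y ω := by
        funext ω
        simp only [hXdef]
        ring
      have hXint : Integrable (fun ω => ξ ω * X ω) P := by
        rw [hXrw]
        exact (hZint.const_mul t).add hYint
      have hXI : (∫ ω, ξ ω * X ω ∂P) = t * (∫ ω, ξ ω * Z ω ∂P) + ∫ ω, ξ ω * Y ω ∂P := by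
        rw [hXrw, integral_add (hZint.const_mul t) hYint, integral_const_mul]
      have hXle : (∫ ω, ξ ω * X ω ∂P) ≤ x₀ := by
        rw [hXI]
        have h1 : t * (∫ ω, ξ ω * Z ω ∂P) ≤ t * (x₀ - d) := by
          exact mul_le_mul_of_nonneg_left hZle ht0.le
        nlinarith
      have hminX : (fun ω => min (X ω) 0) =ᵐ[P] Y := by
        filter_upwards [hZoff, hZon, hYonA, hYoffA] with ω h1 h2 h3 h4
        by_cases hω : ω ∈ A
        · have hz : 0 ≤ Z ω := h2 hω
          have hy : Y ω = 0 := h3 hω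
          have hX' : X ω = t * Z ω := by simp [hXdef, hy]
          rw [hX', hy, min_eq_right (mul_nonneg ht0.le hz)]
        · have hz : Z ω = 0 := h1 hω
          have hy : Y ω ≤ 0 := h4 hω
          have hX' : X ω = Y ω := by simp [hXdef, hz]
          rw [hX', min_eq_left hy]
      have hXρ : ρ (fun ω => min (X ω) 0) ≤ (ρ₀ : EReal) := by
        rw [haeρ _ _ hminX]
        exact hYρ
      have hXH : X ∈ Hset P ξ ρ ρ₀ x₀ := ⟨hXint, hXle, hXρ⟩
      have hmaxX : (fun ω => max (X ω) 0) =ᵐ[P] (fun ω => max (t * Z ω) 0) := by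
        filter_upwards [hZoff, hZon, hYonA, hYoffA] with ω h1 h2 h3 h4
        by_cases hω : ω ∈ A
        · have hX' : X ω = t * Z ω := by simp [hXdef, h3 hω]
          rw [hX']
        · have hz : Z ω = 0 := h1 hω
          have hX' : X ω = Y ω := by simp [hXdef, hz]
          rw [hX', hz, mul_zero, max_eq_right (h4 hω), max_self]
      have hIt : Integrable (fun ω => u (max (t * Z ω) 0)) P := by
        refine hint.mono'
          ((hucont.measurable.comp_aemeasurable (haeZ.const_mul t)).aestronglyMeasurable) ?_
        filter_upwards with ω
        rw [Real.norm_eq_abs, abs_of_nonneg (hunn _ (le_max_right _ _))]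
        refine humono (mem_Ici.mpr (le_max_right _ _)) (mem_Ici.mpr (le_max_right _ _)) ?_
        refine max_le ?_ (le_max_right _ _)
        rcases le_or_gt 0 (Z ω) with h | h
        · exact le_trans (by nlinarith) (le_max_left _ _)
        · exact le_trans (by nlinarith : t * Z ω ≤ 0) (le_max_right _ _)
      have hUX : Uof P u X = ∫ ω, u (max (t * Z ω) 0) ∂P := by
        refine integral_congr_ae ?_
        filter_upwards [hmaxX] with ω h
        exact congrArg u h
      have hpt : ∀ᵐ ω ∂P, t * u (max (Z ω) 0) ≤ u (max (t * Z ω) 0) := by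
        filter_upwards with ω
        have hw : (0:ℝ) ≤ max (Z ω) 0 := le_max_right _ _
        have hmm : max (t * Z ω) 0 = t * max (Z ω) 0 := by
          rcases le_or_gt 0 (Z ω) with h | h
          · rw [max_eq_left (mul_nonneg ht0.le h), max_eq_left h]
          · rw [max_eq_right h.le, mul_zero,
              max_eq_right (by nlinarith : t * Z ω ≤ 0)]
        rw [hmm]
        have hcc := hconc.2 (mem_Ici.mpr hw) (mem_Ici.mpr (le_refl (0:ℝ))) ht0.le
          (by linarith : (0:ℝ) ≤ 1 - t) (by ring)
        simpa [smul_eq_mul, hu0] using hcc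
      have h1 : t * Uof P u Z ≤ Uof P u X := by
        calc t * Uof P u Z = ∫ ω, t * u (max (Z ω) 0) ∂P := (integral_const_mul _ _).symm
          _ ≤ ∫ ω, u (max (t * Z ω) 0) ∂P := integral_mono_ae (hint.const_mul t) hIt hpt
          _ = Uof P u X := hUX.symm
      have h2 : ((Uof P u X : ℝ) : EReal) ≤ S := le_sSup ⟨X, hXH, rfl⟩
      rw [hSeq] at h2
      exact le_trans h1 (EReal.coe_le_coe_iff.mp h2)
    have hlim : Tendsto (fun t : ℝ => t * Uof P u Z) (nhdsWithin 1 (Iio 1))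
        (nhds (Uof P u Z)) := by
      have h := (continuous_mul_right (Uof P u Z)).tendsto 1
      simpa using h.mono_left nhdsWithin_le_nhds
    have hcle : Uof P u Z ≤ S.toReal := by
      refine le_of_tendsto hlim ?_
      filter_upwards [Ioo_mem_nhdsLT_of_mem (show (1:ℝ) ∈ Ioc 0 1 by constructor <;> norm_num)]
        with t ht
      exact hts t ht.1 ht.2
    rw [hSeq]
    exact EReal.coe_le_coe_iff.mpr hcle
end
end

section
/- Assume ρ₀ > ρ(0) and Δ(A) > −∞ for every A ∈ 𝓕. Let A* ∈ 𝓕 with P(A*) > 0 and Y* ∈ H₂(A*) be such that U(A*, x⁺(A*)) = sup_{A ∈ 𝓕} U(A, x⁺(A)) and E[ξY*] = Δ(A*) = inf_{Y ∈ H₂(A*)} E[ξY]. If λ* > 0 solves E[ξ I(λ*ξ) 1_{A*}] = x⁺(A*), then X* := I(λ*ξ) 1_{A*} + Y* belongs to H and U(X*) = sup_{X ∈ H} U(X). -/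
open MeasureTheory Set Filter
open scoped Classical ENNReal

noncomputable section

variable {Ω : Type*} [MeasurableSpace Ω]

section auxu
variable {u u' : ℝ → ℝ} {I : ℝ → ℝ}

lemma tangent_le (hu_conc : StrictConcaveOn ℝ (Ici 0) u)
    (hu_d1 : ∀ x ∈ Ici (0:ℝ), HasDerivWithinAt u (u' x) (Ici 0) x)
    {a b : ℝ} (ha : 0 ≤ a) (hb : 0 ≤ b) :
    u b ≤ u a + u' a * (b - a) := by
  rcases lt_trichotomy a b with h | rfl | h
  · have hs := (hu_conc.concaveOn).slope_le_of_hasDerivWithinAt ha hb h (hu_d1 a ha)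
    rw [slope_def_field, div_le_iff₀ (by linarith)] at hs
    linarith
  · simp
  · have hs := (hu_conc.concaveOn).le_slope_of_hasDerivWithinAt hb ha h (hu_d1 a ha)
    rw [slope_def_field, le_div_iff₀ (by linarith)] at hs
    nlinarith

lemma u'_strictAnti (hu_conc : StrictConcaveOn ℝ (Ici 0) u)
    (hu_d1 : ∀ x ∈ Ici (0:ℝ), HasDerivWithinAt u (u' x) (Ici 0) x)
    {a b : ℝ} (ha : 0 ≤ a) (hab : a < b) : u' b < u' a := by
  have hb : (0:ℝ) ≤ b := le_trans ha hab.le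
  have h1 := hu_conc.slope_lt_of_hasDerivWithinAt ha hb hab (hu_d1 a ha)
  have h2 := hu_conc.lt_slope_of_hasDerivWithinAt ha hb hab (hu_d1 b hb)
  linarith

lemma dichot (hu_d2' : ContinuousOn u' (Ici 0))
    (hu'lim : Tendsto u' atTop (nhds 0))
    {y : ℝ} (hy : 0 < y) :
    (∃ x > (0:ℝ), u' x = y) ∨ (∀ x > (0:ℝ), u' x < y) := by
  by_contra hc
  push_neg at hc
  obtain ⟨hne, x, hx, hxy⟩ := hc
  have hxy' : y < u' x := lt_of_le_of_ne hxy (fun h => hne x hx h.symm)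
  obtain ⟨M, hM1, hM2⟩ := ((hu'lim.eventually_lt_const hy).and (eventually_ge_atTop x)).exists
  have hxM : x ≤ M := hM2
  have hcont : ContinuousOn u' (Icc x M) :=
    hu_d2'.mono (fun t ht => le_trans hx.le ht.1)
  have hmem : y ∈ Icc (u' M) (u' x) := ⟨hM1.le, hxy'.le⟩
  obtain ⟨c, hc1, hc2⟩ := intermediate_value_Icc' hxM hcont hmem
  exact hne c (lt_of_lt_of_le hx hc1.1) hc2

variable (hu_conc : StrictConcaveOn ℝ (Ici 0) u)
  (hu_d1 : ∀ x ∈ Ici (0:ℝ), HasDerivWithinAt u (u' x) (Ici 0) x)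
  (hu_d2' : ContinuousOn u' (Ici 0))
  (hu_mono : StrictMonoOn u (Ici 0)) (hu0 : u 0 = 0)
  (hu'lim : Tendsto u' atTop (nhds 0))
  (hI1 : ∀ y : ℝ, 0 < y → (∃ x > (0:ℝ), u' x = y) → 0 < I y ∧ u' (I y) = y)
  (hI2 : ∀ y : ℝ, 0 < y → (∀ x > (0:ℝ), u' x < y) → I y = 0)
include hu_conc hu_d1 hu_d2' hu'lim hI1 hI2

lemma I_nonneg {y : ℝ} (hy : 0 < y) : 0 ≤ I y := by
  rcases dichot hu_d2' hu'lim hy with h | h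
  · exact (hI1 y hy h).1.le
  · exact (hI2 y hy h).ge

include hu0 in
lemma I_maximizes {y : ℝ} (hy : 0 < y) {z : ℝ} (hz : 0 ≤ z) :
    u z ≤ u (I y) + y * (z - I y) := by
  rcases dichot hu_d2' hu'lim hy with h | h
  · obtain ⟨hIpos, hIy⟩ := hI1 y hy h
    have := tangent_le hu_conc hu_d1 hIpos.le hz
    rwa [hIy] at this
  · have hI0 := hI2 y hy h
    rcases eq_or_lt_of_le hz with rfl | hz'
    · simp [hI0, hu0]
    · have ht := tangent_le hu_conc hu_d1 (le_refl (0:ℝ)) hz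
      have hu'0 : u' 0 ≤ y := by
        have hcw : ContinuousWithinAt u' (Ici 0) 0 := hu_d2' 0 self_mem_Ici
        have hten : Tendsto u' (nhdsWithin 0 (Ioi 0)) (nhds (u' 0)) :=
          hcw.tendsto.mono_left (nhdsWithin_mono 0 Ioi_subset_Ici_self)
        refine le_of_tendsto hten ?_
        filter_upwards [self_mem_nhdsWithin] with t ht
        exact (h t ht).le
      rw [hI0, hu0]
      nlinarith

include hu0 in
lemma u_ge_lin {y : ℝ} (hy : 0 < y) : y * I y ≤ u (I y) := by
  rcases dichot hu_d2' hu'lim hy with h | h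
  · obtain ⟨hIpos, hIy⟩ := hI1 y hy h
    have := tangent_le hu_conc hu_d1 hIpos.le (le_refl 0)
    rw [hIy, hu0] at this
    nlinarith
  · simp [hI2 y hy h, hu0]

include hu0 in
lemma vconj_bdd {y : ℝ} (hy : 0 < y) :
    u (I y) - I y * y ∈ upperBounds {z | ∃ x ≥ (0:ℝ), z = u x - x * y} := by
  rintro z ⟨x, hx, rfl⟩
  have := I_maximizes hu_conc hu_d1 hu_d2' hu0 hu'lim hI1 hI2 hy hx
  nlinarith

include hu0 in
lemma vconj_ge {y : ℝ} (hy : 0 < y) {x : ℝ} (hx : 0 ≤ x) :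
    u x - x * y ≤ vconj u y :=
  le_csSup ⟨_, vconj_bdd hu_conc hu_d1 hu_d2' hu0 hu'lim hI1 hI2 hy⟩ ⟨x, hx, rfl⟩

include hu0 in
lemma vconj_nonneg {y : ℝ} (hy : 0 < y) : 0 ≤ vconj u y := by
  have := vconj_ge hu_conc hu_d1 hu_d2' hu0 hu'lim hI1 hI2 hy (le_refl (0:ℝ))
  rw [hu0] at this; linarith

include hu0 in
lemma yI_le {y : ℝ} (hy : 0 < y) : y * I y ≤ 2 * vconj u (y / 2) := by
  have h1 : u (I y) - I y * (y / 2) ≤ vconj u (y / 2) :=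
    vconj_ge hu_conc hu_d1 hu_d2' hu0 hu'lim hI1 hI2 (by linarith)
      (I_nonneg hu_conc hu_d1 hu_d2' hu'lim hI1 hI2 hy)
  have h2 := u_ge_lin hu_conc hu_d1 hu_d2' hu0 hu'lim hI1 hI2 hy
  linarith

include hu0 in
lemma uI_le {y : ℝ} (hy : 0 < y) : u (I y) ≤ 2 * vconj u (y / 2) := by
  have h1 : u (I y) - I y * (y / 2) ≤ vconj u (y / 2) :=
    vconj_ge hu_conc hu_d1 hu_d2' hu0 hu'lim hI1 hI2 (by linarith)
      (I_nonneg hu_conc hu_d1 hu_d2' hu'lim hI1 hI2 hy)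
  have h2 := yI_le hu_conc hu_d1 hu_d2' hu0 hu'lim hI1 hI2 hy
  linarith

lemma I_anti {y₁ y₂ : ℝ} (h1 : 0 < y₁) (h12 : y₁ ≤ y₂) : I y₂ ≤ I y₁ := by
  have h2 : 0 < y₂ := lt_of_lt_of_le h1 h12
  rcases dichot hu_d2' hu'lim h2 with h | h
  · obtain ⟨hIpos2, hIy2⟩ := hI1 y₂ h2 h
    rcases dichot hu_d2' hu'lim h1 with h' | h'
    · obtain ⟨hIpos1, hIy1⟩ := hI1 y₁ h1 h'
      by_contra hcon
      push_neg at hcon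
      have := u'_strictAnti hu_conc hu_d1 hIpos1.le hcon
      rw [hIy1, hIy2] at this
      linarith
    · exact absurd (h' (I y₂) hIpos2) (by rw [hIy2]; exact fun hl => absurd h12 (not_le.mpr hl))
  · rw [hI2 y₂ h2 h]
    exact I_nonneg hu_conc hu_d1 hu_d2' hu'lim hI1 hI2 h1

end auxu


lemma isUpperSet_measurable {S : Set ℝ} (h : IsUpperSet S) : MeasurableSet S :=
  h.ordConnected.measurableSet

lemma measJ {f : ℝ → ℝ}
    (hanti : ∀ y₁ y₂ : ℝ, 0 < y₁ → y₁ ≤ y₂ → f y₂ ≤ f y₁) :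
    Measurable (fun y : ℝ => if 0 < y then f y else 0) := by
  apply measurable_of_Iio
  intro a
  have : (fun y : ℝ => if 0 < y then f y else 0) ⁻¹' Iio a
      = {y : ℝ | 0 < y ∧ f y < a} ∪ (if (0:ℝ) < a then Iic 0 else ∅) := by
    ext y
    by_cases hy : 0 < y <;> by_cases ha : (0:ℝ) < a <;>
      simp [hy, ha, not_lt.mpr, le_of_not_gt]
  rw [this]
  refine MeasurableSet.union (isUpperSet_measurable ?_) ?_
  · intro y₁ y₂ h12 hy1
    exact ⟨lt_of_lt_of_le hy1.1 h12, lt_of_le_of_lt (hanti y₁ y₂ hy1.1 h12) hy1.2⟩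
  · split <;> simp

theorem stmt7
    (P : Measure Ω) [IsProbabilityMeasure P]
    (ξ : Ω → ℝ) (hξm : Measurable ξ)
    (hξpos : ∀ᵐ ω ∂P, 0 < ξ ω)
    (hξint : Integrable ξ P) (hξ1 : (∫ ω, ξ ω ∂P) = 1)
    (u u' u'' : ℝ → ℝ)
    (hu_d1 : ∀ x ∈ Ici (0:ℝ), HasDerivWithinAt u (u' x) (Ici 0) x)
    (hu_d2 : ∀ x ∈ Ici (0:ℝ), HasDerivWithinAt u' (u'' x) (Ici 0) x)
    (hu_conc : StrictConcaveOn ℝ (Ici 0) u)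
    (hu_mono : StrictMonoOn u (Ici 0))
    (hu0 : u 0 = 0)
    (hu'lim : Tendsto u' atTop (nhds 0))
    (hv_int : ∀ l : ℝ, 0 < l → Integrable (fun ω => vconj u (l * ξ ω)) P)
    (I : ℝ → ℝ)
    (hI1 : ∀ y : ℝ, 0 < y → (∃ x > (0:ℝ), u' x = y) → 0 < I y ∧ u' (I y) = y)
    (hI2 : ∀ y : ℝ, 0 < y → (∀ x > (0:ℝ), u' x < y) → I y = 0)
    (ρ : (Ω → ℝ) → EReal)
    (hρ_mono : ∀ X Y : Ω → ℝ, (∀ᵐ ω ∂P, X ω ≤ Y ω) → ρ Y ≤ ρ X)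
    (hρ_cash : ∀ (X : Ω → ℝ) (m : ℝ), ρ (fun ω => X ω + m) = ρ X - (m : EReal))
    (hρ_conv : ∀ (X Y : Ω → ℝ) (t : ℝ), 0 ≤ t → t ≤ 1 →
      ρ (fun ω => t * X ω + (1 - t) * Y ω) ≤ (t : EReal) * ρ X + ((1 - t : ℝ) : EReal) * ρ Y)
    (hρ_law : ∀ X Y : Ω → ℝ, Measure.map X P = Measure.map Y P → ρ X = ρ Y)
    (x₀ ρ₀ : ℝ) (hx₀ : 0 ≤ x₀)
    (hρ₀ : ρ (fun _ => (0:ℝ)) < (ρ₀ : EReal))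
    (hΔ : ∀ A : Set Ω, MeasurableSet A → BddBelow (DSet P ξ ρ ρ₀ A))
    (Astar : Set Ω) (hAm : MeasurableSet Astar) (hPA : 0 < P Astar)
    (hAopt : Uval P ξ u Astar (x₀ - sInf (DSet P ξ ρ ρ₀ Astar))
      = ⨆ (A : Set Ω) (_ : MeasurableSet A),
          Uval P ξ u A (x₀ - sInf (DSet P ξ ρ ρ₀ A)))
    (Ystar : Ω → ℝ) (hYmem : Ystar ∈ H2 P ξ ρ ρ₀ Astar)
    (hYopt : (∫ ω, ξ ω * Ystar ω ∂P) = sInf (DSet P ξ ρ ρ₀ Astar))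
    (lam : ℝ) (hlam : 0 < lam)
    (hbud : (∫ ω, ξ ω * Astar.indicator (fun ω' => I (lam * ξ ω')) ω ∂P)
      = x₀ - sInf (DSet P ξ ρ ρ₀ Astar)) :
    (fun ω => Astar.indicator (fun ω' => I (lam * ξ ω')) ω + Ystar ω)
      ∈ Hset P ξ ρ ρ₀ x₀ ∧
    ∀ X ∈ Hset P ξ ρ ρ₀ x₀,
      Uof P u X ≤ Uof P u (fun ω => Astar.indicator (fun ω' => I (lam * ξ ω')) ω + Ystar ω) := by
  classical
  have hu_d2' : ContinuousOn u' (Ici 0) := fun x hx => (hu_d2 x hx).continuousWithinAt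
  have hImax : ∀ y : ℝ, 0 < y → ∀ z : ℝ, 0 ≤ z → u z ≤ u (I y) + y * (z - I y) :=
    fun y hy z hz => I_maximizes hu_conc hu_d1 hu_d2' hu0 hu'lim hI1 hI2 hy hz
  have hInn : ∀ y : ℝ, 0 < y → 0 ≤ I y :=
    fun y hy => I_nonneg hu_conc hu_d1 hu_d2' hu'lim hI1 hI2 hy
  have hyIle : ∀ y : ℝ, 0 < y → y * I y ≤ 2 * vconj u (y / 2) :=
    fun y hy => yI_le hu_conc hu_d1 hu_d2' hu0 hu'lim hI1 hI2 hy
  have huIle : ∀ y : ℝ, 0 < y → u (I y) ≤ 2 * vconj u (y / 2) :=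
    fun y hy => uI_le hu_conc hu_d1 hu_d2' hu0 hu'lim hI1 hI2 hy
  have hvnn : ∀ y : ℝ, 0 < y → 0 ≤ vconj u y :=
    fun y hy => vconj_nonneg hu_conc hu_d1 hu_d2' hu0 hu'lim hI1 hI2 hy
  have hunn : ∀ t : ℝ, 0 ≤ t → 0 ≤ u t := by
    intro t ht
    rcases eq_or_lt_of_le ht with rfl | h
    · exact le_of_eq hu0.symm
    · exact hu0 ▸ (hu_mono self_mem_Ici (le_of_lt h) h).le
  set Zs : Ω → ℝ := Astar.indicator (fun ω' => I (lam * ξ ω')) with hZsdef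
  set g : Ω → ℝ := fun ω => if 0 < ξ ω then I (lam * ξ ω) else 0 with hgdef
  have hganti : ∀ y₁ y₂ : ℝ, 0 < y₁ → y₁ ≤ y₂ → I (lam * y₂) ≤ I (lam * y₁) := by
    intro y₁ y₂ h1 h12
    exact I_anti hu_conc hu_d1 hu_d2' hu'lim hI1 hI2 (by positivity) (by nlinarith)
  have hgmeas : Measurable g := by
    rw [hgdef]
    exact (measJ (f := fun y => I (lam * y)) hganti).comp hξm
  have hgae : (fun ω => I (lam * ξ ω)) =ᵐ[P] g := by
    filter_upwards [hξpos] with ω hω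
    simp [hgdef, hω]
  have hZs_ae : Zs =ᵐ[P] Astar.indicator g := by
    filter_upwards [hgae] with ω hω
    by_cases hmem : ω ∈ Astar
    · rw [hZsdef, Set.indicator_of_mem hmem, Set.indicator_of_mem hmem, hω]
    · rw [hZsdef, Set.indicator_of_notMem hmem, Set.indicator_of_notMem hmem]
  have hZsm : AEStronglyMeasurable Zs P :=
    ((hgmeas.indicator hAm).aestronglyMeasurable).congr hZs_ae.symm
  have hξZm : AEStronglyMeasurable (fun ω => ξ ω * Zs ω) P :=
    (hξm.aemeasurable.mul hZsm.aemeasurable).aestronglyMeasurable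
  have hB2int : Integrable (fun ω => 2 * vconj u (lam / 2 * ξ ω)) P :=
    (hv_int (lam / 2) (by positivity)).const_mul 2
  have hBint : Integrable (fun ω => 2 / lam * vconj u (lam / 2 * ξ ω)) P :=
    (hv_int (lam / 2) (by positivity)).const_mul (2 / lam)
  have hdom1 : ∀ᵐ ω ∂P, ‖ξ ω * Zs ω‖ ≤ 2 / lam * vconj u (lam / 2 * ξ ω) := by
    filter_upwards [hξpos] with ω hω
    by_cases hmem : ω ∈ Astar
    · have hy : 0 < lam * ξ ω := by positivity
      have h1 := hyIle _ hy
      have h2 : lam * ξ ω / 2 = lam / 2 * ξ ω := by ring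
      rw [h2] at h1
      have hzv : Zs ω = I (lam * ξ ω) := by rw [hZsdef]; exact Set.indicator_of_mem hmem _
      have hnn : 0 ≤ ξ ω * Zs ω := by rw [hzv]; exact mul_nonneg hω.le (hInn _ hy)
      rw [Real.norm_eq_abs, abs_of_nonneg hnn, hzv, div_mul_eq_mul_div, le_div_iff₀ hlam]
      nlinarith [h1]
    · have hzv : Zs ω = 0 := by rw [hZsdef]; exact Set.indicator_of_notMem hmem _
      rw [hzv, mul_zero, norm_zero]
      have hv := hvnn (lam / 2 * ξ ω) (by positivity)
      have : (0:ℝ) ≤ 2 / lam := by positivity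
      exact mul_nonneg this hv
  have hξZint : Integrable (fun ω => ξ ω * Zs ω) P := hBint.mono' hξZm hdom1
  set W : Ω → ℝ := fun ω => u (max (Zs ω) 0) with hWdef
  have humax : Monotone (fun t : ℝ => u (max t 0)) := by
    intro a b hab
    show u (max a 0) ≤ u (max b 0)
    rcases eq_or_lt_of_le (max_le_max hab (le_refl (0:ℝ))) with h | h
    · rw [h]
    · exact (hu_mono (le_max_right a 0) (le_max_right b 0) h).le
  have hWm : AEStronglyMeasurable W P := by
    have hm : Measurable (fun ω => u (max (Astar.indicator g ω) 0)) :=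
      humax.measurable.comp (hgmeas.indicator hAm)
    refine hm.aestronglyMeasurable.congr ?_
    filter_upwards [hZs_ae] with ω hω
    rw [hWdef]
    simp only [← hω]
  have hWnn : ∀ ω, 0 ≤ W ω := fun ω => hunn _ (le_max_right _ _)
  have hdomW : ∀ᵐ ω ∂P, ‖W ω‖ ≤ 2 * vconj u (lam / 2 * ξ ω) := by
    filter_upwards [hξpos] with ω hω
    rw [Real.norm_eq_abs, abs_of_nonneg (hWnn ω)]
    by_cases hmem : ω ∈ Astar
    · have hy : 0 < lam * ξ ω := by positivity
      have hzv : Zs ω = I (lam * ξ ω) := by rw [hZsdef]; exact Set.indicator_of_mem hmem _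
      have h1 := huIle _ hy
      have h2 : lam * ξ ω / 2 = lam / 2 * ξ ω := by ring
      rw [h2] at h1
      have hWval : W ω = u (I (lam * ξ ω)) := by
        rw [hWdef]; simp only [hzv, max_eq_left (hInn _ hy)]
      rw [hWval]; exact h1
    · have hzv : Zs ω = 0 := by rw [hZsdef]; exact Set.indicator_of_notMem hmem _
      have hW0 : W ω = 0 := by
        rw [hWdef]
        show u (max (Zs ω) 0) = 0
        rw [hzv, max_self]; exact hu0
      rw [hW0]
      have hv := hvnn (lam / 2 * ξ ω) (by positivity)
      linarith
  have hWint : Integrable W P := hB2int.mono' hWm hdomW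
  have hsplit : (fun ω => ξ ω * (Zs ω + Ystar ω)) = fun ω => ξ ω * Zs ω + ξ ω * Ystar ω := by
    funext ω; ring
  have hXint : Integrable (fun ω => ξ ω * (Zs ω + Ystar ω)) P := by
    rw [hsplit]; exact hξZint.add hYmem.1
  have hXeq : (∫ ω, ξ ω * (Zs ω + Ystar ω) ∂P) = x₀ := by
    rw [hsplit, integral_add hξZint hYmem.1, hbud, hYopt]; ring
  have hρcongr : ∀ f h : Ω → ℝ, f =ᵐ[P] h → ρ f = ρ h := by
    intro f h hfh
    exact le_antisymm (hρ_mono h f hfh.symm.le) (hρ_mono f h hfh.le)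
  have hminX : (fun ω => min (Zs ω + Ystar ω) 0) =ᵐ[P] Ystar := by
    filter_upwards [hξpos, hYmem.2.2.1, hYmem.2.2.2] with ω hω h1 h2
    by_cases hmem : ω ∈ Astar
    · have hzv : Zs ω = I (lam * ξ ω) := by rw [hZsdef]; exact Set.indicator_of_mem hmem _
      rw [h1 hmem, hzv, add_zero]
      exact min_eq_right (hInn _ (by positivity))
    · have hzv : Zs ω = 0 := by rw [hZsdef]; exact Set.indicator_of_notMem hmem _
      rw [hzv, zero_add]
      exact min_eq_left (h2 hmem)
  constructor
  · exact ⟨hXint, le_of_eq hXeq, by rw [hρcongr _ _ hminX]; exact hYmem.2.1⟩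
  · intro X hX
    have hXam : AEMeasurable X P := by
      have h1 : AEMeasurable (fun ω => (ξ ω)⁻¹ * (ξ ω * X ω)) P :=
        hξm.inv.aemeasurable.mul hX.1.aemeasurable
      refine h1.congr ?_
      filter_upwards [hξpos] with ω hω
      exact inv_mul_cancel_left₀ hω.ne' _
    set X' : Ω → ℝ := hXam.mk X with hX'def
    have hX'm : Measurable X' := hXam.measurable_mk
    have hXX' : X =ᵐ[P] X' := hXam.ae_eq_mk
    set B : Set Ω := {ω | 0 < X' ω} with hBdef
    have hBm : MeasurableSet B := measurableSet_lt measurable_const hX'm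
    set Y : Ω → ℝ := fun ω => min (X' ω) 0 with hYdef
    set Z : Ω → ℝ := fun ω => max (X' ω) 0 with hZdef
    have hminform : (fun ω => min (ξ ω * X ω) 0) = fun ω => (ξ ω * X ω - |ξ ω * X ω|) / 2 := by
      funext ω; rcases le_total (ξ ω * X ω) 0 with h | h
      · rw [min_eq_left h, abs_of_nonpos h]; ring
      · rw [min_eq_right h, abs_of_nonneg h]; ring
    have hmaxform : (fun ω => max (ξ ω * X ω) 0) = fun ω => (ξ ω * X ω + |ξ ω * X ω|) / 2 := by
      funext ω; rcases le_total (ξ ω * X ω) 0 with h | h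
      · rw [max_eq_right h, abs_of_nonpos h]; ring
      · rw [max_eq_left h, abs_of_nonneg h]; ring
    have hminint : Integrable (fun ω => min (ξ ω * X ω) 0) P := by
      rw [hminform]; exact (hX.1.sub hX.1.abs).div_const 2
    have hmaxint : Integrable (fun ω => max (ξ ω * X ω) 0) P := by
      rw [hmaxform]; exact (hX.1.add hX.1.abs).div_const 2
    have hYaeq : (fun ω => ξ ω * Y ω) =ᵐ[P] fun ω => min (ξ ω * X ω) 0 := by
      filter_upwards [hξpos, hXX'] with ω hω hx
      rw [hYdef, hx]
      show ξ ω * min (X' ω) 0 = min (ξ ω * X' ω) 0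
      rcases le_total (X' ω) 0 with h | h
      · rw [min_eq_left h, min_eq_left (mul_nonpos_iff.mpr (Or.inl ⟨hω.le, h⟩))]
      · rw [min_eq_right h, min_eq_right (mul_nonneg hω.le h), mul_zero]
    have hZaeq : (fun ω => ξ ω * Z ω) =ᵐ[P] fun ω => max (ξ ω * X ω) 0 := by
      filter_upwards [hξpos, hXX'] with ω hω hx
      rw [hZdef, hx]
      show ξ ω * max (X' ω) 0 = max (ξ ω * X' ω) 0
      rcases le_total (X' ω) 0 with h | h
      · rw [max_eq_right h, max_eq_right (mul_nonpos_iff.mpr (Or.inl ⟨hω.le, h⟩)), mul_zero]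
      · rw [max_eq_left h, max_eq_left (mul_nonneg hω.le h)]
    have hξYint : Integrable (fun ω => ξ ω * Y ω) P := hminint.congr hYaeq.symm
    have hξZint2 : Integrable (fun ω => ξ ω * Z ω) P := hmaxint.congr hZaeq.symm
    have hYH2 : Y ∈ H2 P ξ ρ ρ₀ B := by
      refine ⟨hξYint, ?_, ?_, ?_⟩
      · have heq : (fun ω => min (X ω) 0) =ᵐ[P] Y := by
          filter_upwards [hXX'] with ω hx
          rw [hYdef, hx]
        calc ρ Y = ρ (fun ω => min (X ω) 0) := (hρcongr _ _ heq).symm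
          _ ≤ (ρ₀ : EReal) := hX.2.2
      · exact Eventually.of_forall (fun ω hω => min_eq_right (le_of_lt hω))
      · exact Eventually.of_forall (fun ω _ => min_le_right _ _)
    have hInfB : sInf (DSet P ξ ρ ρ₀ B) ≤ ∫ ω, ξ ω * Y ω ∂P :=
      csInf_le (hΔ B hBm) ⟨Y, hYH2, rfl⟩
    have hZYX : (∫ ω, ξ ω * Z ω ∂P) + (∫ ω, ξ ω * Y ω ∂P) = ∫ ω, ξ ω * X ω ∂P := by
      rw [← integral_add hξZint2 hξYint]
      refine integral_congr_ae ?_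
      filter_upwards [hXX'] with ω hx
      have hmm := max_add_min (X' ω) 0
      rw [hZdef, hYdef, hx, ← mul_add, hmm, add_zero]
    have hZle : (∫ ω, ξ ω * Z ω ∂P) ≤ x₀ - sInf (DSet P ξ ρ ρ₀ B) := by
      have h := hX.2.1; linarith
    have hZH1 : Z ∈ H1 P ξ B (x₀ - sInf (DSet P ξ ρ ρ₀ B)) := by
      refine ⟨hξZint2, hZle, Eventually.of_forall ?_, Eventually.of_forall ?_⟩
      · intro ω hω
        exact max_eq_right (not_lt.mp hω)
      · intro ω _; exact le_max_right _ _
    have hUXZ : Uof P u X = Uof P u Z := by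
      refine integral_congr_ae ?_
      filter_upwards [hXX'] with ω hx
      rw [hx, hZdef]
      rw [max_eq_left (le_max_right (X' ω) 0)]
    have hmain : ∀ Z₂ ∈ H1 P ξ Astar (x₀ - sInf (DSet P ξ ρ ρ₀ Astar)),
        Uof P u Z₂ ≤ ∫ ω, W ω ∂P := by
      intro Z₂ hZ₂
      by_cases hint : Integrable (fun ω => u (max (Z₂ ω) 0)) P
      · have hae : ∀ᵐ ω ∂P, u (max (Z₂ ω) 0) ≤ W ω + lam * (ξ ω * Z₂ ω - ξ ω * Zs ω) := by
          filter_upwards [hξpos, hZ₂.2.2.1, hZ₂.2.2.2] with ω hω hoff hon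
          by_cases hmem : ω ∈ Astar
          · have hy : 0 < lam * ξ ω := by positivity
            have hz : 0 ≤ Z₂ ω := hon hmem
            have hkey := hImax _ hy _ hz
            have hzv : Zs ω = I (lam * ξ ω) := by
              rw [hZsdef]; exact Set.indicator_of_mem hmem _
            have hWval : W ω = u (I (lam * ξ ω)) := by
              rw [hWdef]; simp only [hzv, max_eq_left (hInn _ hy)]
            rw [max_eq_left hz, hWval, hzv]
            nlinarith [hkey]
          · have h0 : Z₂ ω = 0 := hoff hmem
            have hzv : Zs ω = 0 := by
              rw [hZsdef]; exact Set.indicator_of_notMem hmem _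
            have hW0 : W ω = 0 := by
              rw [hWdef]
              show u (max (Zs ω) 0) = 0
              rw [hzv, max_self]; exact hu0
            rw [h0, hzv, hW0]
            simp [hu0]
        have hRint : Integrable (fun ω => W ω + lam * (ξ ω * Z₂ ω - ξ ω * Zs ω)) P :=
          hWint.add ((hZ₂.1.sub hξZint).const_mul lam)
        have h1 : Uof P u Z₂ ≤ ∫ ω, (W ω + lam * (ξ ω * Z₂ ω - ξ ω * Zs ω)) ∂P :=
          integral_mono_ae hint hRint hae
        have h2a : (∫ ω, (W ω + lam * (ξ ω * Z₂ ω - ξ ω * Zs ω)) ∂P)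
            = (∫ ω, W ω ∂P) + ∫ ω, lam * (ξ ω * Z₂ ω - ξ ω * Zs ω) ∂P :=
          integral_add hWint ((hZ₂.1.sub hξZint).const_mul lam)
        have h2b : (∫ ω, lam * (ξ ω * Z₂ ω - ξ ω * Zs ω) ∂P)
            = lam * ∫ ω, (ξ ω * Z₂ ω - ξ ω * Zs ω) ∂P := integral_const_mul _ _
        have h2c : (∫ ω, (ξ ω * Z₂ ω - ξ ω * Zs ω) ∂P)
            = (∫ ω, ξ ω * Z₂ ω ∂P) - ∫ ω, ξ ω * Zs ω ∂P := integral_sub hZ₂.1 hξZint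
        have h3 : (∫ ω, ξ ω * Z₂ ω ∂P) ≤ x₀ - sInf (DSet P ξ ρ ρ₀ Astar) := hZ₂.2.1
        have h5 : lam * ((∫ ω, ξ ω * Z₂ ω ∂P) - ∫ ω, ξ ω * Zs ω ∂P) ≤ 0 := by
          rw [hbud]
          exact mul_nonpos_iff.mpr (Or.inl ⟨hlam.le, by linarith⟩)
        rw [h2c] at h2b
        linarith
      · have h0 : Uof P u Z₂ = 0 := integral_undef hint
        rw [h0]
        exact integral_nonneg (fun ω => hWnn ω)
    have e1 : ((Uof P u Z : ℝ) : EReal) ≤ Uval P ξ u B (x₀ - sInf (DSet P ξ ρ ρ₀ B)) :=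
      le_sSup ⟨Z, hZH1, rfl⟩
    have e2 : Uval P ξ u B (x₀ - sInf (DSet P ξ ρ ρ₀ B))
        ≤ ⨆ (A : Set Ω) (_ : MeasurableSet A), Uval P ξ u A (x₀ - sInf (DSet P ξ ρ ρ₀ A)) :=
      le_iSup₂ (f := fun (A : Set Ω) (_ : MeasurableSet A) =>
        Uval P ξ u A (x₀ - sInf (DSet P ξ ρ ρ₀ A))) B hBm
    have e3 : Uval P ξ u Astar (x₀ - sInf (DSet P ξ ρ ρ₀ Astar))
        ≤ ((∫ ω, W ω ∂P : ℝ) : EReal) := by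
      refine sSup_le ?_
      rintro b ⟨Z₂, hZ₂, rfl⟩
      exact EReal.coe_le_coe_iff.mpr (hmain Z₂ hZ₂)
    have e4 : ((Uof P u X : ℝ) : EReal) ≤ ((∫ ω, W ω ∂P : ℝ) : EReal) := by
      rw [hUXZ]
      exact le_trans e1 (le_trans e2 (le_trans (le_of_eq hAopt.symm) e3))
    have e5 : (∫ ω, W ω ∂P) = Uof P u (fun ω => Zs ω + Ystar ω) := by
      refine integral_congr_ae ?_
      filter_upwards [hξpos, hYmem.2.2.1, hYmem.2.2.2] with ω hω h1 h2
      by_cases hmem : ω ∈ Astar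
      · rw [h1 hmem, add_zero, hWdef]
      · have hzv : Zs ω = 0 := by
          rw [hZsdef]; exact Set.indicator_of_notMem hmem _
        rw [hzv, zero_add, hWdef]
        simp only [hzv, max_eq_right (h2 hmem)]
        rw [max_self]
    have e4' : Uof P u X ≤ ∫ ω, W ω ∂P := EReal.coe_le_coe_iff.mp e4
    rw [← e5]
    exact e4'
end
end

section
/- Let (Ω, 𝓕, P) be an atomless probability space and let F₁, F₂ be distribution functions of nonnegative random variables (i.e., right-continuous nondecreasing functions with F_i(x) = 0 for x < 0 and lim_{x→∞} F_i(x) = 1). Then sup{ E[XY] : X, Y measurable functions Ω → [0,∞) with P(X ≤ x) = F₁(x) and P(Y ≤ x) = F₂(x) for all x } = ∫₀¹ F₁^{−1}(u) F₂^{−1}(u) du, as an identity in [0, +∞]. -/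
/-!
On an atomless space, Sierpiński's theorem (every value between `0` and `μ s` is the measure of a
subset of `s`) yields a refining family of sets of dyadic measures, and from it a random variable
`U` uniform on `(0, 1)`. The quantile transforms `F₁⁻¹(U)`, `F₂⁻¹(U)` have the prescribed marginals
and `E[F₁⁻¹(U) F₂⁻¹(U)]` is the right-hand side. Conversely, by the layer-cake formula
`E[XY] = ∫∫_{s,t>0} P(X > s, Y > t)`, and `P(X > s, Y > t) ≤ min (P(X > s)) (P(Y > t))`, a bound
that depends only on the marginals; it is attained by the quantile pair, whose upper level sets
`{F₁⁻¹(U) > s} = {U > F₁ s}` are nested.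
-/

open MeasureTheory Set Filter
open scoped Classical ENNReal

noncomputable section

variable {Ω : Type*} [MeasurableSpace Ω]

/-- Generalized inverse of a distribution function `F`: `F⁻¹(u) = inf {x : F(x) ≥ u}`. -/
def FinvF (F : ℝ → ℝ) (t : ℝ) : ℝ := sInf {x : ℝ | t ≤ F x}

open scoped Topology

lemma ENNReal.exists_mem_sSup_le_two_mul {S : Set ℝ≥0∞} (hS : S.Nonempty) (htop : sSup S ≠ ∞) :
    ∃ a ∈ S, sSup S ≤ 2 * a := by
  rcases eq_or_ne (sSup S) 0 with h0 | h0
  · obtain ⟨a, ha⟩ := hS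
    exact ⟨a, ha, by simp [h0]⟩
  · obtain ⟨a, ha, hlt⟩ := lt_sSup_iff.1 (ENNReal.half_lt_self h0 htop)
    refine ⟨a, ha, ?_⟩
    rw [ENNReal.div_lt_iff (by norm_num) (by norm_num)] at hlt
    rw [mul_comm]
    exact hlt.le

lemma exists_subset_measure_le_maximal {μ : Measure Ω} [IsFiniteMeasure μ] {s : Set Ω}
    (c : ℝ≥0∞) : ∃ T ⊆ s, MeasurableSet T ∧ μ T ≤ c ∧
      ∀ w ⊆ s \ T, MeasurableSet w → μ T + μ w ≤ c → μ w = 0 := by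
  let Adm (t : Set Ω) : Set (Set Ω) := {u | u ⊆ s \ t ∧ MeasurableSet u ∧ μ t + μ u ≤ c}
  have step : ∀ t, μ t ≤ c → ∃ u ∈ Adm t, sSup (μ '' Adm t) ≤ 2 * μ u := by
    intro t ht
    have hne : (μ '' Adm t).Nonempty := ⟨0, ∅, ⟨empty_subset _, .empty, by simpa⟩, measure_empty⟩
    have htop : sSup (μ '' Adm t) ≠ ∞ :=
      ne_top_of_le_ne_top (measure_ne_top μ s) <|
        sSup_le <| by rintro _ ⟨u, hu, rfl⟩; exact measure_mono (hu.1.trans sdiff_subset)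
    obtain ⟨_, ⟨u, hu, rfl⟩, hle⟩ := ENNReal.exists_mem_sSup_le_two_mul hne htop
    exact ⟨u, hu, hle⟩
  choose! u hu hu_half using step
  let seq : ℕ → Set Ω := fun n => Nat.rec ∅ (fun _ t => t ∪ u t) n
  have hseq : ∀ n, seq n ⊆ s ∧ MeasurableSet (seq n) ∧ μ (seq n) ≤ c := by
    intro n
    induction n with
    | zero => exact ⟨empty_subset _, .empty, by simp [seq]⟩
    | succ n ih =>
      obtain ⟨hsub, hmeas, hle⟩ := hu _ ih.2.2
      exact ⟨union_subset ih.1 (hsub.trans sdiff_subset), ih.2.1.union hmeas,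
        (measure_union_le _ _).trans hle⟩
  have hseq_measure : ∀ n, μ (seq (n + 1)) = μ (seq n) + μ (u (seq n)) := fun n =>
    measure_union (disjoint_left.2 fun _ hx hxu => ((hu _ (hseq n).2.2).1 hxu).2 hx)
      (hu _ (hseq n).2.2).2.1
  have hmono : Monotone seq := monotone_nat_of_le_succ fun n => subset_union_left
  refine ⟨⋃ n, seq n, iUnion_subset fun n => (hseq n).1, .iUnion fun n => (hseq n).2.1,
    hmono.directed_le.measure_iUnion ▸ iSup_le fun n => (hseq n).2.2, fun w hws hw hwc => ?_⟩
  -- `w` stays admissible forever, so the steps cannot shrink to `0` unless `μ w = 0`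
  have hw_le : ∀ n, μ w ≤ 2 * μ (u (seq n)) := fun n => by
    have hadm : w ∈ Adm (seq n) := ⟨hws.trans (sdiff_subset_sdiff_right (subset_iUnion seq n)), hw,
      (add_le_add_left (measure_mono (subset_iUnion seq n)) _).trans hwc⟩
    exact (le_sSup (mem_image_of_mem μ hadm)).trans (hu_half _ (hseq n).2.2)
  have hgrowth : ∀ n : ℕ, n * μ w ≤ 2 * μ (seq n) := by
    intro n
    induction n with
    | zero => simp
    | succ n ih =>
      rw [hseq_measure, mul_add, Nat.cast_succ, add_mul, one_mul]
      exact add_le_add ih (hw_le n)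
  by_contra hw0
  have hs_top : 2 * μ s ≠ ∞ := ENNReal.mul_ne_top (by norm_num) (measure_ne_top μ s)
  obtain ⟨n, hn⟩ := ENNReal.exists_nat_mul_gt hw0 hs_top
  exact (hn.trans_le ((hgrowth n).trans (by gcongr; exact (hseq n).1))).false

def Atomless (μ : Measure Ω) : Prop :=
  ∀ s : Set Ω, MeasurableSet s → 0 < μ s →
    ∃ t : Set Ω, t ⊆ s ∧ MeasurableSet t ∧ 0 < μ t ∧ μ t < μ s

namespace Atomless

variable {μ : Measure Ω} [IsFiniteMeasure μ]

lemma exists_subset_measure_pos_le_half (hμ : Atomless μ) {s : Set Ω} (hs : MeasurableSet s)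
    (hpos : 0 < μ s) : ∃ t ⊆ s, MeasurableSet t ∧ 0 < μ t ∧ μ t ≤ μ s / 2 := by
  obtain ⟨t, hts, ht, htpos, htlt⟩ := hμ s hs hpos
  by_cases h : μ t ≤ μ s / 2
  · exact ⟨t, hts, ht, htpos, h⟩
  have hdiff : μ (s \ t) = μ s - μ t := measure_sdiff hts ht.nullMeasurableSet (measure_ne_top μ t)
  refine ⟨s \ t, sdiff_subset, hs.diff ht, hdiff ▸ tsub_pos_of_lt htlt, ?_⟩
  calc μ (s \ t) = μ s - μ t := hdiff
    _ ≤ μ s - μ s / 2 := tsub_le_tsub_left (not_le.1 h).le _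
    _ = μ s / 2 := ENNReal.sub_half (measure_ne_top μ s)

lemma exists_subset_measure_pos_le (hμ : Atomless μ) {s : Set Ω} (hs : MeasurableSet s)
    (hpos : 0 < μ s) {ε : ℝ≥0∞} (hε : 0 < ε) : ∃ t ⊆ s, MeasurableSet t ∧ 0 < μ t ∧ μ t ≤ ε := by
  have halve : ∀ n : ℕ, ∃ t ⊆ s, MeasurableSet t ∧ 0 < μ t ∧ μ t ≤ 2⁻¹ ^ n * μ s := by
    intro n
    induction n with
    | zero => exact ⟨s, subset_rfl, hs, hpos, by simp⟩
    | succ n ih =>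
      obtain ⟨t, hts, ht, htpos, htle⟩ := ih
      obtain ⟨u, hut, hu, hupos, hule⟩ := hμ.exists_subset_measure_pos_le_half ht htpos
      refine ⟨u, hut.trans hts, hu, hupos, ?_⟩
      calc μ u ≤ μ t / 2 := hule
        _ ≤ (2⁻¹ ^ n * μ s) / 2 := by gcongr
        _ = 2⁻¹ ^ (n + 1) * μ s := by rw [div_eq_mul_inv, pow_succ]; ring
  have hlim : Tendsto (fun n : ℕ => 2⁻¹ ^ n * μ s) atTop (𝓝 0) := by
    simpa using ENNReal.Tendsto.mul_const
      (ENNReal.tendsto_pow_atTop_nhds_zero_of_lt_one (by norm_num)) (Or.inr (measure_ne_top μ s))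
  obtain ⟨n, hn⟩ := (hlim.eventually (gt_mem_nhds hε)).exists
  obtain ⟨t, hts, ht, htpos, htle⟩ := halve n
  exact ⟨t, hts, ht, htpos, htle.trans hn.le⟩

/-- Sierpiński's theorem. -/
lemma exists_subset_measure_eq (hμ : Atomless μ) {s : Set Ω} (hs : MeasurableSet s) {c : ℝ≥0∞}
    (hc : c ≤ μ s) : ∃ t ⊆ s, MeasurableSet t ∧ μ t = c := by
  obtain ⟨T, hTs, hT, hTc, hmax⟩ := exists_subset_measure_le_maximal (μ := μ) (s := s) c
  refine ⟨T, hTs, hT, hTc.eq_or_lt.resolve_right fun hlt => ?_⟩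
  have hsT : 0 < μ (s \ T) := by
    rw [measure_sdiff hTs hT.nullMeasurableSet (measure_ne_top μ T)]
    exact tsub_pos_of_lt (hlt.trans_le hc)
  obtain ⟨w, hws, hw, hwpos, hwle⟩ :=
    hμ.exists_subset_measure_pos_le (hs.diff hT) hsT (tsub_pos_of_lt hlt)
  exact hwpos.ne' (hmax w hws hw ((add_le_add_right hwle _).trans_eq (add_tsub_cancel_of_le hTc)))

lemma exists_between_measure_eq (hμ : Atomless μ) {t₁ t₂ : Set Ω} (h12 : t₁ ⊆ t₂)
    (ht₁ : MeasurableSet t₁) (ht₂ : MeasurableSet t₂) {c : ℝ≥0∞} (hc₁ : μ t₁ ≤ c)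
    (hc₂ : c ≤ μ t₂) : ∃ t, t₁ ⊆ t ∧ t ⊆ t₂ ∧ MeasurableSet t ∧ μ t = c := by
  have hdiff : μ (t₂ \ t₁) = μ t₂ - μ t₁ :=
    measure_sdiff h12 ht₁.nullMeasurableSet (measure_ne_top μ t₁)
  obtain ⟨v, hv, hvm, hvμ⟩ :=
    hμ.exists_subset_measure_eq (ht₂.diff ht₁) (c := c - μ t₁) (hdiff ▸ tsub_le_tsub_right hc₂ _)
  refine ⟨t₁ ∪ v, subset_union_left, union_subset h12 (hv.trans sdiff_subset), ht₁.union hvm, ?_⟩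
  rw [measure_union (disjoint_left.2 fun _ hx hxv => (hv hxv).2 hx) hvm, hvμ,
    add_tsub_cancel_of_le hc₁]

end Atomless

structure IsDyadicLevel (μ : Measure Ω) (n : ℕ) (f : ℕ → Set Ω) : Prop where
  measurableSet : ∀ k, MeasurableSet (f k)
  mono : Monotone f
  measure_eq : ∀ k, μ (f k) = ENNReal.ofReal (min ((k : ℝ) / 2 ^ n) 1)

lemma Atomless.exists_isDyadicLevel_succ {μ : Measure Ω} [IsFiniteMeasure μ] (hμ : Atomless μ)
    {n : ℕ} {f : ℕ → Set Ω} (hf : IsDyadicLevel μ n f) :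
    ∃ g, IsDyadicLevel μ (n + 1) g ∧ ∀ k, g (2 * k) = f k := by
  -- `g k` is squeezed between `f (k / 2)` and `f ((k + 1) / 2)`, which coincide for even `k`
  have hbetween : ∀ k : ℕ, ∃ t, f (k / 2) ⊆ t ∧ t ⊆ f ((k + 1) / 2) ∧ MeasurableSet t ∧
      μ t = ENNReal.ofReal (min ((k : ℝ) / 2 ^ (n + 1)) 1) := by
    intro k
    have hk : ((k : ℝ) / 2 ^ (n + 1)) = (k / 2 : ℝ) / 2 ^ n := by rw [pow_succ]; ring
    refine hμ.exists_between_measure_eq (hf.mono (Nat.div_le_div_right k.le_succ))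
      (hf.measurableSet _) (hf.measurableSet _) ?_ ?_ <;> rw [hf.measure_eq, hk] <;> gcongr
    · exact Nat.cast_div_le
    · rw [div_le_iff₀ two_pos]
      exact_mod_cast (by omega : k ≤ (k + 1) / 2 * 2)
  choose g hg_lower hg_upper hg hgμ using hbetween
  refine ⟨g, ⟨hg, monotone_nat_of_le_succ fun k => (hg_upper k).trans (hg_lower (k + 1)), hgμ⟩,
    fun k => ?_⟩
  have h₁ : 2 * k / 2 = k := by omega
  have h₂ : (2 * k + 1) / 2 = k := by omega
  have hupper := hg_upper (2 * k)
  have hlower := hg_lower (2 * k)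
  rw [h₂] at hupper
  rw [h₁] at hlower
  exact hupper.antisymm hlower

/-- Up to null sets, `set n k` is `{toFun ≤ k / 2 ^ n}` for the uniform variable `toFun` built
below. -/
structure DyadicChain (μ : Measure Ω) where
  set : ℕ → ℕ → Set Ω
  isDyadicLevel : ∀ n, IsDyadicLevel μ n (set n)
  set_succ_two_mul : ∀ n k, set (n + 1) (2 * k) = set n k
  set_zero_one : set 0 1 = univ

lemma Atomless.nonempty_dyadicChain {μ : Measure Ω} [IsProbabilityMeasure μ] (hμ : Atomless μ) :
    Nonempty (DyadicChain μ) := by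
  let base : ℕ → Set Ω := fun k => if k = 0 then ∅ else univ
  have hbase : IsDyadicLevel μ 0 base := by
    refine ⟨fun k => ?_, monotone_nat_of_le_succ fun k => ?_, fun k => ?_⟩
    · by_cases hk : k = 0 <;> simp [base, hk]
    · by_cases hk : k = 0 <;> simp [base, hk]
    · rcases Nat.eq_zero_or_pos k with rfl | hk
      · simp [base]
      · have : (1 : ℝ) ≤ k := by exact_mod_cast hk
        simp [base, hk.ne', min_eq_right this]
  choose! refine hrefine hrefine_two_mul using
    fun n (f : ℕ → Set Ω) (hf : IsDyadicLevel μ n f) => hμ.exists_isDyadicLevel_succ hf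
  let D : ℕ → ℕ → Set Ω := fun n => Nat.rec base refine n
  have hD : ∀ n, IsDyadicLevel μ n (D n) := fun n => by
    induction n with
    | zero => exact hbase
    | succ n ih => exact hrefine n _ ih
  exact ⟨⟨D, hD, fun n => hrefine_two_mul n _ (hD n), by simp [D, base]⟩⟩

lemma tendsto_nat_floor_mul_two_pow_div {y : ℝ} (hy : 0 ≤ y) :
    Tendsto (fun n : ℕ => (⌊y * 2 ^ n⌋₊ : ℝ) / 2 ^ n) atTop (𝓝 y) :=
  (tendsto_nat_floor_mul_div_atTop hy).comp (tendsto_pow_atTop_atTop_of_one_lt one_lt_two)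

lemma tendsto_nat_floor_mul_two_pow_add_one_div {y : ℝ} (hy : 0 ≤ y) :
    Tendsto (fun n : ℕ => ((⌊y * 2 ^ n⌋₊ + 1 : ℕ) : ℝ) / 2 ^ n) atTop (𝓝 y) := by
  have hinv : Tendsto (fun n : ℕ => ((2 : ℝ) ^ n)⁻¹) atTop (𝓝 0) :=
    tendsto_inv_atTop_zero.comp (tendsto_pow_atTop_atTop_of_one_lt one_lt_two)
  simpa [add_div] using (tendsto_nat_floor_mul_two_pow_div hy).add hinv

lemma volume_Iic_inter_Ioo_zero_one (y : ℝ) :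
    volume (Iic y ∩ Ioo 0 1) = ENNReal.ofReal (min y 1) := by
  rw [measure_congr ((ae_eq_refl (Iic y)).inter Ioo_ae_eq_Ioc), inter_comm, Ioc_inter_Iic,
    Real.volume_Ioc, sub_zero, inf_comm]

namespace DyadicChain

variable {μ : Measure Ω} (D : DyadicChain μ)

lemma set_add_mul_two_pow (n m k : ℕ) : D.set (n + m) (k * 2 ^ m) = D.set n k := by
  induction m generalizing k with
  | zero => simp
  | succ m ih => rw [← add_assoc, pow_succ, ← mul_assoc, mul_comm _ 2, D.set_succ_two_mul, ih]

lemma set_subset_set {n m k j : ℕ} (h : (k : ℝ) / 2 ^ n ≤ j / 2 ^ m) :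
    D.set n k ⊆ D.set m j := by
  rw [← D.set_add_mul_two_pow n m, ← D.set_add_mul_two_pow m n, add_comm m]
  apply (D.isDyadicLevel _).mono
  rw [div_le_div_iff₀ (by positivity) (by positivity)] at h
  exact_mod_cast h

def values (ω : Ω) : Set ℝ := {x | ∃ n k : ℕ, ω ∈ D.set n k ∧ (k : ℝ) / 2 ^ n = x}

def toFun (ω : Ω) : ℝ := sInf (D.values ω)

lemma values_nonneg {ω : Ω} {x : ℝ} (hx : x ∈ D.values ω) : 0 ≤ x := by
  obtain ⟨n, k, -, rfl⟩ := hx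
  positivity

lemma toFun_nonneg (ω : Ω) : 0 ≤ D.toFun ω :=
  Real.sInf_nonneg fun _ => D.values_nonneg

lemma toFun_le_of_mem {ω : Ω} {n k : ℕ} (hω : ω ∈ D.set n k) : D.toFun ω ≤ k / 2 ^ n :=
  csInf_le ⟨0, fun _ => D.values_nonneg⟩ ⟨n, k, hω, rfl⟩

lemma mem_of_toFun_lt {ω : Ω} {n k : ℕ} (hω : D.toFun ω < k / 2 ^ n) : ω ∈ D.set n k := by
  obtain ⟨_, ⟨m, j, hωj, rfl⟩, hlt⟩ :=
    exists_lt_of_csInf_lt (s := D.values ω) ⟨_, 0, 1, D.set_zero_one ▸ mem_univ ω, rfl⟩ hω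
  exact D.set_subset_set hlt.le hωj

lemma setOf_toFun_le {y : ℝ} (hy : 0 ≤ y) :
    {ω | D.toFun ω ≤ y} = ⋂ n, D.set n (⌊y * 2 ^ n⌋₊ + 1) := by
  ext ω
  simp only [mem_ofPred_eq, mem_iInter]
  refine ⟨fun h n => D.mem_of_toFun_lt (h.trans_lt ?_), fun h => ?_⟩
  · rw [lt_div_iff₀ (by positivity)]
    exact_mod_cast Nat.lt_floor_add_one (y * 2 ^ n)
  · exact ge_of_tendsto' (tendsto_nat_floor_mul_two_pow_add_one_div hy)
      fun n => D.toFun_le_of_mem (h n)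

lemma setOf_toFun_le_of_neg {y : ℝ} (hy : y < 0) : {ω | D.toFun ω ≤ y} = ∅ :=
  eq_empty_of_forall_notMem fun ω hω => (hy.trans_le (D.toFun_nonneg ω)).not_ge hω

lemma measurable_toFun : Measurable D.toFun := by
  refine measurable_of_Iic fun y => show MeasurableSet {ω | D.toFun ω ≤ y} from ?_
  rcases lt_or_ge y 0 with hy | hy
  · rw [D.setOf_toFun_le_of_neg hy]
    exact .empty
  · rw [D.setOf_toFun_le hy]
    exact .iInter fun n => (D.isDyadicLevel n).measurableSet _

lemma measure_toFun_le (y : ℝ) : μ {ω | D.toFun ω ≤ y} = ENNReal.ofReal (min y 1) := by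
  rcases lt_or_ge y 0 with hy | hy
  · rw [D.setOf_toFun_le_of_neg hy, measure_empty,
      ENNReal.ofReal_eq_zero.2 ((min_le_left _ _).trans hy.le)]
  have hcont : ∀ {a : ℕ → ℝ}, Tendsto a atTop (𝓝 y) →
      Tendsto (fun n => ENNReal.ofReal (min (a n) 1)) atTop (𝓝 (ENNReal.ofReal (min y 1))) :=
    fun ha => (ENNReal.continuous_ofReal.tendsto _).comp (ha.min tendsto_const_nhds)
  refine le_antisymm (ge_of_tendsto' (hcont (tendsto_nat_floor_mul_two_pow_add_one_div hy))
    fun n => ?_) (le_of_tendsto' (hcont (tendsto_nat_floor_mul_two_pow_div hy)) fun n => ?_)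
  · rw [← (D.isDyadicLevel n).measure_eq, D.setOf_toFun_le hy]
    exact measure_mono (iInter_subset _ n)
  · rw [← (D.isDyadicLevel n).measure_eq]
    refine measure_mono fun ω hω => (D.toFun_le_of_mem hω).trans ?_
    rw [div_le_iff₀ (by positivity)]
    exact Nat.floor_le (by positivity)

lemma map_toFun [IsProbabilityMeasure μ] :
    μ.map D.toFun = volume.restrict (Ioo 0 1) := by
  refine Measure.ext_of_Iic _ _ fun y => ?_
  rw [Measure.map_apply D.measurable_toFun measurableSet_Iic,
    Measure.restrict_apply measurableSet_Iic]
  exact (D.measure_toFun_le y).trans (volume_Iic_inter_Ioo_zero_one y).symm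

end DyadicChain

lemma Atomless.exists_uniform {μ : Measure Ω} [IsProbabilityMeasure μ] (hμ : Atomless μ) :
    ∃ U : Ω → ℝ, Measurable U ∧ (∀ ω, U ω ∈ Ioo 0 1) ∧ μ.map U = volume.restrict (Ioo 0 1) := by
  obtain ⟨D⟩ := hμ.nonempty_dyadicChain
  have hD := D.measurable_toFun
  have hae : ∀ᵐ ω ∂μ, D.toFun ω ∈ Ioo 0 1 :=
    ae_of_ae_map hD.aemeasurable (D.map_toFun ▸ ae_restrict_mem measurableSet_Ioo)
  refine ⟨fun ω => if D.toFun ω ∈ Ioo 0 1 then D.toFun ω else 2⁻¹,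
    hD.ite (hD measurableSet_Ioo) measurable_const, fun ω => ?_, ?_⟩
  · dsimp only
    split_ifs with h
    exacts [h, ⟨by norm_num, by norm_num⟩]
  · rw [← D.map_toFun]
    exact Measure.map_congr (hae.mono fun ω h => if_pos h)

lemma FinvF_le_iff {F : ℝ → ℝ} (hmono : Monotone F) (hrc : ∀ x, ContinuousWithinAt F (Ici x) x)
    {u : ℝ} (hlow : ∃ x, F x < u) (hhigh : ∃ x, u ≤ F x) (x : ℝ) :
    FinvF F u ≤ x ↔ u ≤ F x := by
  obtain ⟨x₀, hx₀⟩ := hlow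
  have hbdd : BddBelow {y | u ≤ F y} :=
    ⟨x₀, fun y (hy : u ≤ F y) => (hmono.reflect_lt (hx₀.trans_le hy)).le⟩
  refine ⟨fun h => ?_, fun h => csInf_le hbdd h⟩
  have hright : ∀ z, x < z → u ≤ F z := fun z hz => by
    obtain ⟨y, hy, hyz⟩ := exists_lt_of_csInf_lt hhigh (h.trans_lt hz)
    exact le_trans hy (hmono hyz.le)
  exact ge_of_tendsto ((hrc x).mono_left (nhdsWithin_mono _ Ioi_subset_Ici_self))
    (eventually_nhdsWithin_of_forall hright)

structure IsNonnegCDF (F : ℝ → ℝ) : Prop where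
  mono : Monotone F
  rightCont : ∀ x, ContinuousWithinAt F (Ici x) x
  eq_zero_of_neg : ∀ x < 0, F x = 0
  tendsto_atTop : Tendsto F atTop (𝓝 1)

namespace IsNonnegCDF

variable {F : ℝ → ℝ} (hF : IsNonnegCDF F)
include hF

lemma nonneg (x : ℝ) : 0 ≤ F x := by
  rcases lt_or_ge x 0 with hx | hx
  · exact (hF.eq_zero_of_neg x hx).ge
  · exact (hF.eq_zero_of_neg (-1) (by norm_num)).ge.trans (hF.mono (by linarith))

lemma le_one (x : ℝ) : F x ≤ 1 := hF.mono.ge_of_tendsto hF.tendsto_atTop x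

lemma FinvF_le_iff {u : ℝ} (hu : u ∈ Ioo 0 1) (x : ℝ) : FinvF F u ≤ x ↔ u ≤ F x :=
  _root_.FinvF_le_iff hF.mono hF.rightCont
    ⟨-1, by rw [hF.eq_zero_of_neg _ (by norm_num)]; exact hu.1⟩
    (hF.tendsto_atTop.eventually (eventually_ge_nhds hu.2)).exists x

lemma FinvF_nonneg {u : ℝ} (hu : u ∈ Ioo 0 1) : 0 ≤ FinvF F u := by
  by_contra! h
  have := (hF.FinvF_le_iff hu _).1 le_rfl
  rw [hF.eq_zero_of_neg _ h] at this
  exact hu.1.not_ge this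

lemma monotoneOn_FinvF : MonotoneOn (FinvF F) (Ioo 0 1) := fun _ hu _ hv huv =>
  (hF.FinvF_le_iff hu _).2 (huv.trans ((hF.FinvF_le_iff hv _).1 le_rfl))

lemma setOf_FinvF_comp_le {α : Type*} {U : α → ℝ} (hU : ∀ a, U a ∈ Ioo 0 1) (x : ℝ) :
    {a | FinvF F (U a) ≤ x} = U ⁻¹' Iic (F x) :=
  ext fun ω => hF.FinvF_le_iff (hU ω) x

lemma setOf_lt_FinvF_comp {α : Type*} {U : α → ℝ} (hU : ∀ a, U a ∈ Ioo 0 1) (x : ℝ) :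
    {a | x < FinvF F (U a)} = U ⁻¹' Ioi (F x) :=
  ext fun ω => not_le.symm.trans ((hF.FinvF_le_iff (hU ω) x).not.trans not_le)

variable {U : Ω → ℝ} (hU : ∀ ω, U ω ∈ Ioo 0 1) (hUm : Measurable U)
include hU hUm

lemma measurable_FinvF_comp : Measurable fun ω => FinvF F (U ω) :=
  measurable_of_Iic fun x => show MeasurableSet {ω | FinvF F (U ω) ≤ x} by
    rw [hF.setOf_FinvF_comp_le hU]
    exact hUm measurableSet_Iic

lemma measure_FinvF_comp_le {μ : Measure Ω}
    (hlaw : μ.map U = volume.restrict (Ioo 0 1)) (x : ℝ) :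
    μ {ω | FinvF F (U ω) ≤ x} = ENNReal.ofReal (F x) := by
  rw [hF.setOf_FinvF_comp_le hU, ← Measure.map_apply hUm measurableSet_Iic, hlaw,
    Measure.restrict_apply measurableSet_Iic, volume_Iic_inter_Ioo_zero_one,
    min_eq_left (hF.le_one x)]

end IsNonnegCDF

section Coupling

variable {α : Type*} [MeasurableSpace α]

lemma lintegral_ofReal_mul_eq_lintegral_measure (μ : Measure α) [SFinite μ] {X Y : α → ℝ}
    (hX : Measurable X) (hY : Measurable Y) (hX0 : ∀ a, 0 ≤ X a) :
    ∫⁻ a, ENNReal.ofReal (X a * Y a) ∂μ =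
      ∫⁻ p in Ioi 0 ×ˢ Ioi 0, μ {a | p.1 < X a ∧ p.2 < Y a} := by
  have hrect : ∀ a, ENNReal.ofReal (X a * Y a) =
      ∫⁻ p in Ioi 0 ×ˢ Ioi 0, (Iio (X a) ×ˢ Iio (Y a)).indicator 1 p := by
    intro a
    rw [lintegral_indicator_one (measurableSet_Iio.prod measurableSet_Iio),
      Measure.restrict_apply (measurableSet_Iio.prod measurableSet_Iio), prod_inter_prod,
      Iio_inter_Ioi, Iio_inter_Ioi, Measure.volume_eq_prod, Measure.prod_prod, Real.volume_Ioo,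
      Real.volume_Ioo, sub_zero, sub_zero, ENNReal.ofReal_mul (hX0 a)]
  have hmeas : MeasurableSet {q : α × (ℝ × ℝ) | q.2.1 < X q.1 ∧ q.2.2 < Y q.1} :=
    (measurableSet_lt (by fun_prop) (hX.comp measurable_fst)).inter
      (measurableSet_lt (by fun_prop) (hY.comp measurable_fst))
  simp_rw [hrect]
  rw [lintegral_lintegral_swap ((measurable_one.indicator hmeas).aemeasurable.congr
    (.of_forall fun q => by simp [indicator_apply, Function.uncurry]))]
  refine lintegral_congr fun p => ?_
  rw [← lintegral_indicator_one (s := {a | p.1 < X a ∧ p.2 < Y a})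
    ((measurableSet_lt measurable_const hX).inter (measurableSet_lt measurable_const hY))]
  exact lintegral_congr fun a => by simp [indicator_apply]

lemma measure_lt_eq_of_measure_le_eq (μ : Measure α) [IsFiniteMeasure μ] {X X' : α → ℝ}
    (hX : Measurable X) (hX' : Measurable X')
    (h : ∀ x, μ {a | X a ≤ x} = μ {a | X' a ≤ x}) (x : ℝ) :
    μ {a | x < X a} = μ {a | x < X' a} := by
  have hcompl : ∀ Z : α → ℝ, Measurable Z → μ {a | x < Z a} = μ univ - μ {a | Z a ≤ x} :=
    fun Z hZ => by
      rw [← measure_compl (measurableSet_le hZ measurable_const) (measure_ne_top _ _)]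
      simp_rw [compl_ofPred, not_le]
  rw [hcompl X hX, hcompl X' hX', h]

lemma measure_inter_eq_min_of_subset_or_subset (μ : Measure α) {s t : Set α}
    (h : s ⊆ t ∨ t ⊆ s) : μ (s ∩ t) = min (μ s) (μ t) := by
  rcases h with h | h
  · rw [inter_eq_left.2 h, min_eq_left (measure_mono h)]
  · rw [inter_eq_right.2 h, min_eq_right (measure_mono h)]

lemma lintegral_ofReal_mul_le_of_nested (μ : Measure α) [IsFiniteMeasure μ] {X Y X₀ Y₀ : α → ℝ}
    (hX : Measurable X) (hY : Measurable Y) (hX₀ : Measurable X₀) (hY₀ : Measurable Y₀)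
    (hX0 : ∀ a, 0 ≤ X a) (hX₀0 : ∀ a, 0 ≤ X₀ a)
    (hXX₀ : ∀ x, μ {a | X a ≤ x} = μ {a | X₀ a ≤ x})
    (hYY₀ : ∀ y, μ {a | Y a ≤ y} = μ {a | Y₀ a ≤ y})
    (hnested : ∀ x y, {a | x < X₀ a} ⊆ {a | y < Y₀ a} ∨ {a | y < Y₀ a} ⊆ {a | x < X₀ a}) :
    ∫⁻ a, ENNReal.ofReal (X a * Y a) ∂μ ≤ ∫⁻ a, ENNReal.ofReal (X₀ a * Y₀ a) ∂μ := by
  rw [lintegral_ofReal_mul_eq_lintegral_measure μ hX hY hX0,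
    lintegral_ofReal_mul_eq_lintegral_measure μ hX₀ hY₀ hX₀0]
  refine lintegral_mono fun p => ?_
  calc μ {a | p.1 < X a ∧ p.2 < Y a}
      ≤ min (μ {a | p.1 < X a}) (μ {a | p.2 < Y a}) :=
        le_min (measure_mono fun _ h => h.1) (measure_mono fun _ h => h.2)
    _ = min (μ {a | p.1 < X₀ a}) (μ {a | p.2 < Y₀ a}) := by
        rw [measure_lt_eq_of_measure_le_eq μ hX hX₀ hXX₀,
          measure_lt_eq_of_measure_le_eq μ hY hY₀ hYY₀]
    _ = μ {a | p.1 < X₀ a ∧ p.2 < Y₀ a} :=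
        (measure_inter_eq_min_of_subset_or_subset μ (hnested p.1 p.2)).symm

end Coupling

lemma IsNonnegCDF.lintegral_FinvF_comp_mul {μ : Measure Ω} {F₁ F₂ : ℝ → ℝ} (hF₁ : IsNonnegCDF F₁)
    (hF₂ : IsNonnegCDF F₂) {U : Ω → ℝ} (hUm : Measurable U)
    (hlaw : μ.map U = volume.restrict (Ioo 0 1)) :
    ∫⁻ ω, ENNReal.ofReal (FinvF F₁ (U ω) * FinvF F₂ (U ω)) ∂μ =
      ∫⁻ u in Ioo 0 1, ENNReal.ofReal (FinvF F₁ u * FinvF F₂ u) := by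
  rw [← hlaw, lintegral_map' _ hUm.aemeasurable]
  rw [hlaw]
  exact ENNReal.measurable_ofReal.comp_aemeasurable
    ((aemeasurable_restrict_of_monotoneOn measurableSet_Ioo hF₁.monotoneOn_FinvF).mul
      (aemeasurable_restrict_of_monotoneOn measurableSet_Ioo hF₂.monotoneOn_FinvF))

theorem stmt10
    (P : Measure Ω) [IsProbabilityMeasure P]
    (hatomless : ∀ s : Set Ω, MeasurableSet s → 0 < P s →
      ∃ t : Set Ω, t ⊆ s ∧ MeasurableSet t ∧ 0 < P t ∧ P t < P s)
    (F₁ F₂ : ℝ → ℝ)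
    (hF₁mono : Monotone F₁) (hF₂mono : Monotone F₂)
    (hF₁rc : ∀ x : ℝ, ContinuousWithinAt F₁ (Set.Ici x) x)
    (hF₂rc : ∀ x : ℝ, ContinuousWithinAt F₂ (Set.Ici x) x)
    (hF₁neg : ∀ x : ℝ, x < 0 → F₁ x = 0)
    (hF₂neg : ∀ x : ℝ, x < 0 → F₂ x = 0)
    (hF₁lim : Tendsto F₁ atTop (nhds 1))
    (hF₂lim : Tendsto F₂ atTop (nhds 1)) :
    sSup {r : ℝ≥0∞ | ∃ X Y : Ω → ℝ, Measurable X ∧ Measurable Y ∧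
        (∀ ω, 0 ≤ X ω) ∧ (∀ ω, 0 ≤ Y ω) ∧
        (∀ x : ℝ, P {ω | X ω ≤ x} = ENNReal.ofReal (F₁ x)) ∧
        (∀ x : ℝ, P {ω | Y ω ≤ x} = ENNReal.ofReal (F₂ x)) ∧
        r = ∫⁻ ω, ENNReal.ofReal (X ω * Y ω) ∂P}
      = ∫⁻ t in Set.Ioo (0:ℝ) 1, ENNReal.ofReal (FinvF F₁ t * FinvF F₂ t) := by
  have hF₁ : IsNonnegCDF F₁ := ⟨hF₁mono, hF₁rc, hF₁neg, hF₁lim⟩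
  have hF₂ : IsNonnegCDF F₂ := ⟨hF₂mono, hF₂rc, hF₂neg, hF₂lim⟩
  obtain ⟨U, hUm, hU, hlaw⟩ := Atomless.exists_uniform (μ := P) hatomless
  have hX₀ := hF₁.measurable_FinvF_comp hU hUm
  have hY₀ := hF₂.measurable_FinvF_comp hU hUm
  have hX₀0 : ∀ ω, 0 ≤ FinvF F₁ (U ω) := fun ω => hF₁.FinvF_nonneg (hU ω)
  have hlaw₁ := hF₁.measure_FinvF_comp_le hU hUm hlaw
  have hlaw₂ := hF₂.measure_FinvF_comp_le hU hUm hlaw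
  rw [← hF₁.lintegral_FinvF_comp_mul hF₂ hUm hlaw]
  refine le_antisymm (sSup_le ?_) (le_sSup ⟨_, _, hX₀, hY₀, hX₀0,
    fun ω => hF₂.FinvF_nonneg (hU ω), hlaw₁, hlaw₂, rfl⟩)
  rintro _ ⟨X, Y, hX, hY, hX0, -, hXF, hYF, rfl⟩
  refine lintegral_ofReal_mul_le_of_nested P hX hY hX₀ hY₀ hX0 hX₀0
    (fun x => by rw [hXF, hlaw₁]) (fun y => by rw [hYF, hlaw₂]) fun x y => ?_
  rw [hF₁.setOf_lt_FinvF_comp hU, hF₂.setOf_lt_FinvF_comp hU]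
  exact (le_total (F₂ y) (F₁ x)).imp (fun h => preimage_mono (Ioi_subset_Ioi h))
    (fun h => preimage_mono (Ioi_subset_Ioi h))
end
end

section
/- Let β ∈ (0,1), ρ = CVaR_β, ρ₀ > 0, and assume the law of ξ has no atom. If esssup ξ = +∞, then for every c ∈ ℝ with P(ξ > c) > 0 one has Δ({ξ ≤ c}) = −∞; in particular there exists A ∈ 𝓕 with Δ(A) = −∞. -/
open MeasureTheory Set Filter
open scoped Classical ENNReal

noncomputable section

variable {Ω : Type*} [MeasurableSpace Ω]

/-- Generalized inverse distribution function `F_X^{-1}(t) = inf {x : P(X ≤ x) ≥ t}`. -/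
def Finv (P : Measure Ω) (X : Ω → ℝ) (t : ℝ) : ℝ :=
  sInf {x : ℝ | ENNReal.ofReal t ≤ P {ω | X ω ≤ x}}

/-- `CVaR_β(X) = -(1/β) ∫₀^β F_X^{-1}(u) du`, with value `+∞` when not defined. -/
def cvar (P : Measure Ω) (β : ℝ) (X : Ω → ℝ) : EReal :=
  if IntegrableOn (Finv P X) (Set.Ioo 0 β) volume
  then ((-(β⁻¹ * ∫ t in Set.Ioo (0:ℝ) β, Finv P X t) : ℝ) : EReal)
  else ⊤

/-!
A short position `Y = -a 𝟙_B` on an event with `P(B) < β` has `CVaR_β(Y) = a P(B) / β`, because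
its quantile function is `-a` on `(0, P(B)]` and `0` beyond. Taking `B = {r < ξ}` and
`a = ρ₀ β / P(B)` saturates the risk constraint, `Y` vanishes on `{ξ ≤ c}` once `r ≥ c`, and
`E[ξ Y] ≤ -a r P(B) = -ρ₀ β r`. Since `esssup ξ = ∞`, every tail event has positive probability,
while `P(r < ξ) → 0`; letting `r → ∞` gives `Δ({ξ ≤ c}) = -∞`.
-/

theorem EReal.sInf_image_coe_eq_bot {S : Set ℝ} (h : ¬BddBelow S) :
    sInf ((↑) '' S : Set EReal) = ⊥ := by
  refine sInf_eq_bot.2 fun b hb => ?_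
  obtain ⟨x, -, hxb⟩ := EReal.exists_between_coe_real hb
  obtain ⟨s, hs, hsx⟩ := not_bddBelow_iff.1 h x
  exact ⟨s, mem_image_of_mem _ hs, (EReal.coe_lt_coe_iff.2 hsx).trans hxb⟩

section

variable {P : Measure Ω}

lemma measure_lt_pos_of_essSup_eq_top {f : Ω → ℝ}
    (h : essSup (fun ω => (f ω : EReal)) P = ⊤) (d : ℝ) : 0 < P {ω | d < f ω} := by
  refine pos_iff_ne_zero.2 fun h0 => ?_
  have : essSup (fun ω => (f ω : EReal)) P ≤ d :=
    essSup_le_of_ae_le _ <| (measure_eq_zero_iff_ae_notMem.1 h0).mono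
      fun ω hω => EReal.coe_le_coe_iff.2 (not_lt.1 hω)
  simp [h] at this

lemma tendsto_measure_setOf_lt_atTop [IsFiniteMeasure P] {f : Ω → ℝ} (hf : AEMeasurable f P) :
    Tendsto (fun r : ℝ => P {ω | r < f ω}) atTop (nhds 0) := by
  have hempty : ⋂ r : ℝ, {ω | r < f ω} = ∅ :=
    eq_empty_of_forall_notMem fun ω hω => lt_irrefl (f ω) (mem_iInter.1 hω (f ω))
  simpa [hempty, Function.comp_def] using tendsto_measure_iInter_atTop (μ := P)
    (fun r => nullMeasurableSet_lt aemeasurable_const hf)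
    (fun r s hrs ω (hω : s < f ω) => hrs.trans_lt hω) ⟨0, measure_ne_top P _⟩

lemma finv_indicator_neg_const [IsProbabilityMeasure P] (B : Set Ω) {a t : ℝ} (ha : 0 < a)
    (ht0 : 0 < t) (ht1 : t ≤ 1) :
    Finv P (B.indicator fun _ => -a) t = (Iic (P.real B)).indicator (fun _ => -a) t := by
  set Y : Ω → ℝ := B.indicator fun _ => -a
  have hY_ge : ∀ ω, -a ≤ Y ω := fun ω => by
    by_cases hω : ω ∈ B <;> simp [Y, hω, ha.le]
  have hY_le : ∀ ω, Y ω ≤ 0 := fun ω => by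
    by_cases hω : ω ∈ B <;> simp [Y, hω, ha.le]
  have hle_iff : ∀ x, t ≤ P.real {ω | Y ω ≤ x} ↔ ENNReal.ofReal t ≤ P {ω | Y ω ≤ x} := fun x =>
    (ENNReal.ofReal_le_iff_le_toReal (measure_ne_top P _)).symm
  unfold Finv
  by_cases htB : t ≤ P.real B
  · rw [indicator_of_mem (mem_Iic.2 htB)]
    refine IsLeast.csInf_eq ⟨(hle_iff _).1 <| htB.trans <| measureReal_mono fun ω hω => ?_,
      fun x hx => not_lt.1 fun hxa => ?_⟩
    · simp [Y, show ω ∈ B from hω]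
    · have : {ω | Y ω ≤ x} = ∅ :=
        eq_empty_of_forall_notMem fun ω hω => (hxa.trans_le (hY_ge ω)).not_ge hω
      have hx' := (hle_iff x).2 hx
      rw [this, measureReal_empty] at hx'
      exact ht0.not_ge hx'
  · rw [indicator_of_notMem (by simpa using htB)]
    refine IsLeast.csInf_eq ⟨(hle_iff _).1 ?_, fun x hx => not_lt.1 fun hx0 => htB ?_⟩
    · simpa [hY_le] using ht1
    · refine ((hle_iff _).2 hx).trans (measureReal_mono fun ω hω => ?_)
      by_contra hωB
      exact hx0.not_ge (by simpa [Y, hωB] using (hω : Y ω ≤ x))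

lemma cvar_indicator_neg_const [IsProbabilityMeasure P] (B : Set Ω) {a β : ℝ} (ha : 0 < a)
    (hβ1 : β ≤ 1) (hBβ : P.real B < β) :
    cvar P β (B.indicator fun _ => -a) = ((a * P.real B / β : ℝ) : EReal) := by
  have hFinv : EqOn (Finv P (B.indicator fun _ => -a)) ((Iic (P.real B)).indicator fun _ => -a)
      (Ioo 0 β) := fun t ht => finv_indicator_neg_const B ha ht.1 (ht.2.le.trans hβ1)
  have hint : IntegrableOn (Finv P (B.indicator fun _ => -a)) (Ioo 0 β) :=
    ((integrableOn_const measure_Ioo_lt_top.ne).indicator measurableSet_Iic).congr_fun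
      hFinv.symm measurableSet_Ioo
  have hcap : Iic (P.real B) ∩ Ioo 0 β = Ioc 0 (P.real B) := by
    ext x
    simp only [mem_inter_iff, mem_Iic, mem_Ioo, mem_Ioc]
    constructor
    · rintro ⟨hxB, hx0, -⟩
      exact ⟨hx0, hxB⟩
    · rintro ⟨hx0, hxB⟩
      exact ⟨hxB, hx0, hxB.trans_lt hBβ⟩
  rw [cvar, if_pos hint, setIntegral_congr_fun measurableSet_Ioo hFinv,
    integral_indicator_const _ measurableSet_Iic, measureReal_restrict_apply measurableSet_Iic,
    hcap, Real.volume_real_Ioc_of_le measureReal_nonneg, smul_eq_mul]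
  congr 1
  field_simp
  ring

lemma indicator_mem_H2 [IsProbabilityMeasure P] {ξ : Ω → ℝ} (hξ : Integrable ξ P)
    {β ρ₀ : ℝ} (hβ1 : β ≤ 1) (hρ₀ : 0 < ρ₀) {A B : Set Ω} (hB : MeasurableSet B)
    (hAB : Disjoint A B) (hB0 : 0 < P.real B) (hBβ : P.real B < β) :
    (B.indicator fun _ => -(ρ₀ * β / P.real B)) ∈ H2 P ξ (cvar P β) ρ₀ A := by
  have ha : 0 < ρ₀ * β / P.real B := by
    have := hB0.trans hBβ
    positivity
  refine ⟨?_, ?_, ae_of_all _ fun ω hωA => indicator_of_notMem (hAB.notMem_of_mem_left hωA) _,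
    ae_of_all _ fun ω _ => ?_⟩
  · simpa only [← indicator_mul_right] using (hξ.mul_const _).indicator hB
  · rw [cvar_indicator_neg_const B ha hβ1 hBβ]
    refine le_of_eq (congrArg _ ?_)
    field_simp [(hB0.trans hBβ).ne']
  · by_cases hω : ω ∈ B <;> simp [hω, ha.le]

lemma integral_mul_indicator_setOf_lt_le {ξ : Ω → ℝ} (hξ : Integrable ξ P) [IsFiniteMeasure P]
    {r : ℝ} (hB : MeasurableSet {ω | r < ξ ω}) {a : ℝ} (ha : 0 ≤ a) :
    ∫ ω, ξ ω * {ω | r < ξ ω}.indicator (fun _ => -a) ω ∂P ≤ -(a * r * P.real {ω | r < ξ ω}) := by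
  have htail : r * P.real {ω | r < ξ ω} ≤ ∫ ω in {ω | r < ξ ω}, ξ ω ∂P :=
    setIntegral_ge_of_const_le_real hB (measure_ne_top P _) (fun ω hω => le_of_lt hω)
      hξ.integrableOn
  simp only [← indicator_mul_right]
  rw [integral_indicator hB, integral_mul_const]
  nlinarith

lemma not_bddBelow_DSet_setOf_le [IsProbabilityMeasure P] {ξ : Ω → ℝ} (hξm : Measurable ξ)
    (hξ : Integrable ξ P) {β ρ₀ : ℝ} (hβ0 : 0 < β) (hβ1 : β ≤ 1) (hρ₀ : 0 < ρ₀)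
    (hsup : essSup (fun ω => (ξ ω : EReal)) P = ⊤) (c : ℝ) :
    ¬BddBelow (DSet P ξ (cvar P β) ρ₀ {ω | ξ ω ≤ c}) := by
  rintro ⟨M, hM⟩
  have htail : ∀ᶠ r in atTop, P {ω | r < ξ ω} < ENNReal.ofReal β :=
    (tendsto_measure_setOf_lt_atTop hξm.aemeasurable).eventually
      (gt_mem_nhds (ENNReal.ofReal_pos.2 hβ0))
  obtain ⟨r, hrβ, hr⟩ := (htail.and (eventually_ge_atTop (max c (-M / (ρ₀ * β) + 1)))).exists
  set B := {ω | r < ξ ω}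
  have hB : MeasurableSet B := measurableSet_lt measurable_const hξm
  have hB0 : 0 < P.real B :=
    ENNReal.toReal_pos (measure_lt_pos_of_essSup_eq_top hsup r).ne' (measure_ne_top P _)
  have hBβ : P.real B < β := ENNReal.toReal_lt_of_lt_ofReal hrβ
  have hAB : Disjoint {ω | ξ ω ≤ c} B := disjoint_left.2 fun ω (hωc : ξ ω ≤ c) (hωB : r < ξ ω) =>
    (hωc.trans (le_max_left _ _ |>.trans hr)).not_gt hωB
  have hY := indicator_mem_H2 hξ hβ1 hρ₀ hB hAB hB0 hBβ
  have hM_le := hM ⟨_, hY, rfl⟩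
  have hE := integral_mul_indicator_setOf_lt_le hξ hB (by positivity : 0 ≤ ρ₀ * β / P.real B)
  have hr' : -M < r * (ρ₀ * β) := by
    rw [← div_lt_iff₀ (by positivity)]
    linarith [le_max_right c (-M / (ρ₀ * β) + 1)]
  have hcancel : ρ₀ * β / P.real B * r * P.real B = r * (ρ₀ * β) := by
    field_simp
  dsimp only at hM_le
  linarith

end

theorem stmt17_general
    (P : Measure Ω) [IsProbabilityMeasure P]
    (ξ : Ω → ℝ) (hξm : Measurable ξ)
    (hξint : Integrable ξ P)
    (β : ℝ) (hβ0 : 0 < β) (hβ1 : β < 1)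
    (ρ₀ : ℝ) (hρ₀ : 0 < ρ₀)
    (hsup : essSup (fun ω => ((ξ ω : EReal))) P = ⊤) :
    (∀ c : ℝ, 0 < P {ω | c < ξ ω} →
      sInf ((fun r : ℝ => (r : EReal)) ''
        ((fun Y => ∫ ω, ξ ω * Y ω ∂P) '' H2 P ξ (cvar P β) ρ₀ {ω | ξ ω ≤ c})) = ⊥) ∧
    ∃ A : Set Ω, MeasurableSet A ∧
      sInf ((fun r : ℝ => (r : EReal)) ''
        ((fun Y => ∫ ω, ξ ω * Y ω ∂P) '' H2 P ξ (cvar P β) ρ₀ A)) = ⊥ := by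
  have key : ∀ c : ℝ, sInf ((fun r : ℝ => (r : EReal)) ''
      ((fun Y => ∫ ω, ξ ω * Y ω ∂P) '' H2 P ξ (cvar P β) ρ₀ {ω | ξ ω ≤ c})) = ⊥ := fun c =>
    EReal.sInf_image_coe_eq_bot (not_bddBelow_DSet_setOf_le hξm hξint hβ0 hβ1.le hρ₀ hsup c)
  exact ⟨fun c _ => key c, {ω | ξ ω ≤ 0}, measurableSet_le hξm measurable_const, key 0⟩

theorem stmt17
    (P : Measure Ω) [IsProbabilityMeasure P]
    (ξ : Ω → ℝ) (hξm : Measurable ξ)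
    (hξpos : ∀ᵐ ω ∂P, 0 < ξ ω)
    (hξint : Integrable ξ P) (hξ1 : (∫ ω, ξ ω ∂P) = 1)
    (β : ℝ) (hβ0 : 0 < β) (hβ1 : β < 1)
    (ρ₀ : ℝ) (hρ₀ : 0 < ρ₀)
    (hnoatom : ∀ r : ℝ, P {ω | ξ ω = r} = 0)
    (hsup : essSup (fun ω => ((ξ ω : EReal))) P = ⊤) :
    (∀ c : ℝ, 0 < P {ω | c < ξ ω} →
      sInf ((fun r : ℝ => (r : EReal)) ''
        ((fun Y => ∫ ω, ξ ω * Y ω ∂P) '' H2 P ξ (cvar P β) ρ₀ {ω | ξ ω ≤ c})) = ⊥) ∧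
    ∃ A : Set Ω, MeasurableSet A ∧
      sInf ((fun r : ℝ => (r : EReal)) ''
        ((fun Y => ∫ ω, ξ ω * Y ω ∂P) '' H2 P ξ (cvar P β) ρ₀ A)) = ⊥ :=
  stmt17_general P ξ hξm hξint β hβ0 hβ1 ρ₀ hρ₀ hsup
end
end

section
/- Let ρ = ρ_μ be a spectral risk measure, ρ₀ > 0, and assume the law of ξ has no atom. If limsup_{c → (esssup ξ)⁻} E[ξ 1_{ξ > c}] / ∫₀^{P(ξ > c)} φ(u) du = +∞, then inf_{A ∈ 𝓕} Δ(A) = −∞. -/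
open MeasureTheory Set Filter
open scoped Classical ENNReal

noncomputable section

variable {Ω : Type*} [MeasurableSpace Ω]

/-- `φ(x) = ∫_(x,1] s⁻¹ μ(ds)`. -/
def phiOf (μ : Measure ℝ) (x : ℝ) : ℝ := ∫ s in Set.Ioc x 1, s⁻¹ ∂μ

/-- The spectral risk measure `ρ_μ(X) = ∫₀¹ φ(u) VaR_u(X) du = -∫₀¹ φ(u) F_X^{-1}(u) du`,
with value `+∞` when the integral is not defined. -/
def specRho (P : Measure Ω) (μ : Measure ℝ) (X : Ω → ℝ) : EReal :=
  if IntegrableOn (fun t => phiOf μ t * Finv P X t) (Set.Ioo 0 1) volume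
  then ((-(∫ t in Set.Ioo (0:ℝ) 1, phiOf μ t * Finv P X t) : ℝ) : EReal)
  else ⊤

theorem stmt18
    (P : Measure Ω) [IsProbabilityMeasure P]
    (ξ : Ω → ℝ) (hξm : Measurable ξ)
    (hξpos : ∀ᵐ ω ∂P, 0 < ξ ω)
    (hξint : Integrable ξ P) (hξ1 : (∫ ω, ξ ω ∂P) = 1)
    (μ : Measure ℝ) [IsProbabilityMeasure μ]
    (hμsupp : μ (Set.Icc 0 1) = 1) (hμ0 : μ {0} = 0)
    (ρ₀ : ℝ) (hρ₀ : 0 < ρ₀)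
    (hnoatom : ∀ r : ℝ, P {ω | ξ ω = r} = 0)
    (hlim : limsup (fun c : ℝ =>
        (((∫ ω, Set.indicator {ω' | c < ξ ω'} ξ ω ∂P)
            / ∫ t in Set.Ioo (0:ℝ) ((P {ω | c < ξ ω}).toReal), phiOf μ t : ℝ) : EReal))
      (comap (fun c : ℝ => (c : EReal))
        (nhdsWithin (essSup (fun ω => ((ξ ω : EReal))) P)
          (Set.Iio (essSup (fun ω => ((ξ ω : EReal))) P)))) = (⊤ : EReal)) :
    sInf ((fun r : ℝ => (r : EReal)) ''
      ⋃ (A : Set Ω) (_ : MeasurableSet A),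
        (fun Y => ∫ ω, ξ ω * Y ω ∂P) '' H2 P ξ (specRho P μ) ρ₀ A) = ⊥ := by
  -- Step 1: for every K there is c with large ratio
  have hfreq : ∀ K : ℝ, ∃ c : ℝ,
      K < (∫ ω, Set.indicator {ω' | c < ξ ω'} ξ ω ∂P)
            / ∫ t in Set.Ioo (0:ℝ) ((P {ω | c < ξ ω}).toReal), phiOf μ t := by
    intro K
    by_contra hcon
    push_neg at hcon
    have h2 : limsup (fun c : ℝ =>
        (((∫ ω, Set.indicator {ω' | c < ξ ω'} ξ ω ∂P)
            / ∫ t in Set.Ioo (0:ℝ) ((P {ω | c < ξ ω}).toReal), phiOf μ t : ℝ) : EReal))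
      (comap (fun c : ℝ => (c : EReal))
        (nhdsWithin (essSup (fun ω => ((ξ ω : EReal))) P)
          (Set.Iio (essSup (fun ω => ((ξ ω : EReal))) P)))) ≤ (K : EReal) :=
      Filter.limsup_le_of_le (by isBoundedDefault)
        (Eventually.of_forall fun c => EReal.coe_le_coe_iff.2 (hcon c))
    rw [hlim] at h2
    exact absurd h2 (by simp)
  rw [EReal.eq_bot_iff_forall_lt]
  intro M
  obtain ⟨c, hc⟩ := hfreq (max 1 (-M / ρ₀))
  set S : Set Ω := {ω | c < ξ ω} with hSdef
  have hSm : MeasurableSet S := measurableSet_lt measurable_const hξm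
  set q : ℝ≥0∞ := P S with hqdef
  set p : ℝ := q.toReal with hpdef
  set num : ℝ := ∫ ω, S.indicator ξ ω ∂P with hnumdef
  set den : ℝ := ∫ t in Set.Ioo (0:ℝ) p, phiOf μ t with hdendef
  have hc' : max 1 (-M / ρ₀) < num / den := hc
  have hnum0 : 0 ≤ num :=
    integral_nonneg_of_ae <| hξpos.mono fun ω hω => by
      by_cases h : ω ∈ S
      · simp only [Pi.zero_apply, Set.indicator_of_mem h]; exact hω.le
      · simp [Set.indicator_of_notMem h]
  have hR0 : (0:ℝ) < num / den := lt_of_lt_of_le one_pos ((le_max_left _ _).trans hc'.le)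
  have hden_pos : 0 < den := by
    rcases lt_trichotomy den 0 with h | h | h
    · exact absurd (div_nonpos_iff.2 (Or.inl ⟨hnum0, h.le⟩)) (not_le.2 hR0)
    · rw [h, div_zero] at hR0; exact absurd hR0 (lt_irrefl 0)
    · exact h
  have hφint : IntegrableOn (phiOf μ) (Set.Ioo (0:ℝ) p) volume := by
    by_contra h
    have : den = 0 := integral_undef h
    exact absurd this (ne_of_gt hden_pos)
  have hqne : q ≠ ⊤ := measure_ne_top P S
  have hq1 : q ≤ 1 := prob_le_one
  have hp1 : p ≤ 1 := by
    have := ENNReal.toReal_mono (ENNReal.one_ne_top) hq1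
    simpa using this
  set b : ℝ := ρ₀ / den with hbdef
  have hb_pos : 0 < b := div_pos hρ₀ hden_pos
  set Y : Ω → ℝ := S.indicator fun _ => -b with hYdef
  -- product formula
  have hprod : (fun ω => ξ ω * Y ω) = S.indicator fun ω => ξ ω * (-b) := by
    funext ω
    by_cases h : ω ∈ S
    · simp [hYdef, Set.indicator_of_mem h]
    · simp [hYdef, Set.indicator_of_notMem h]
  have hint : Integrable (fun ω => ξ ω * Y ω) P := by
    rw [hprod]; exact (hξint.mul_const (-b)).indicator hSm
  have hval : (∫ ω, ξ ω * Y ω ∂P) = -b * num := by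
    have hnum' : num = ∫ ω in S, ξ ω ∂P := by
      rw [hnumdef, integral_indicator hSm]
    rw [hprod, integral_indicator hSm, integral_mul_const, ← hnum', mul_comm]
  -- distribution of Y
  have hPle : ∀ x : ℝ, P {ω | Y ω ≤ x} =
      if x < -b then 0 else if x < 0 then q else 1 := by
    intro x
    by_cases h1 : x < -b
    · rw [if_pos h1]
      have he : {ω | Y ω ≤ x} = (∅ : Set Ω) := by
        ext ω
        simp only [Set.mem_setOf_eq, Set.mem_empty_iff_false, iff_false, not_le]
        by_cases hωS : ω ∈ S
        · rw [hYdef, Set.indicator_of_mem hωS]; linarith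
        · rw [hYdef, Set.indicator_of_notMem hωS]; linarith [hb_pos]
      rw [he, measure_empty]
    · rw [if_neg h1]
      by_cases h2 : x < 0
      · rw [if_pos h2]
        have he : {ω | Y ω ≤ x} = S := by
          ext ω
          simp only [Set.mem_setOf_eq]
          by_cases hωS : ω ∈ S
          · rw [hYdef, Set.indicator_of_mem hωS]
            simp only [hωS, iff_true]; linarith
          · rw [hYdef, Set.indicator_of_notMem hωS]
            simp only [hωS, iff_false]; intro h; linarith
        rw [he]
      · rw [if_neg h2]
        have he : {ω | Y ω ≤ x} = Set.univ := by
          ext ω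
          simp only [Set.mem_setOf_eq, Set.mem_univ, iff_true]
          by_cases hωS : ω ∈ S
          · rw [hYdef, Set.indicator_of_mem hωS]; linarith
          · rw [hYdef, Set.indicator_of_notMem hωS]; linarith
        rw [he, measure_univ]
  -- quantile of Y
  have hFinv : ∀ t : ℝ, 0 < t → t ≤ 1 →
      Finv P Y t = if ENNReal.ofReal t ≤ q then -b else 0 := by
    intro t ht0 ht1
    have hLnot : ¬ ENNReal.ofReal t ≤ 0 := by
      simp only [nonpos_iff_eq_zero]
      exact (ENNReal.ofReal_pos.2 ht0).ne'
    have hL1 : ENNReal.ofReal t ≤ 1 := ENNReal.ofReal_le_one.2 ht1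
    have hsetx : {x : ℝ | ENNReal.ofReal t ≤ P {ω | Y ω ≤ x}} =
        if ENNReal.ofReal t ≤ q then Set.Ici (-b) else Set.Ici 0 := by
      by_cases hcond : ENNReal.ofReal t ≤ q
      · rw [if_pos hcond]
        ext x
        rw [Set.mem_setOf_eq, hPle x, Set.mem_Ici]
        constructor
        · intro h
          by_contra hx
          rw [if_pos (not_le.1 hx)] at h
          exact hLnot h
        · intro hx
          rw [if_neg (not_lt.2 hx)]
          by_cases h2 : x < 0
          · rw [if_pos h2]; exact hcond
          · rw [if_neg h2]; exact hL1
      · rw [if_neg hcond]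
        ext x
        rw [Set.mem_setOf_eq, hPle x, Set.mem_Ici]
        constructor
        · intro h
          by_contra hx
          by_cases h1 : x < -b
          · rw [if_pos h1] at h; exact hLnot h
          · rw [if_neg h1, if_pos (not_le.1 hx)] at h; exact hcond h
        · intro hx
          have h1 : ¬ x < -b := by intro h; linarith [hb_pos]
          rw [if_neg h1, if_neg (not_lt.2 hx)]
          exact hL1
    unfold Finv
    rw [hsetx]
    split_ifs <;> exact csInf_Ici
  -- a.e. identification of the integrand
  have hgcongr : (fun t => phiOf μ t * Finv P Y t)
      =ᵐ[volume.restrict (Set.Ioo (0:ℝ) 1)]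
      (fun t => -b * (Set.Ioo (0:ℝ) p).indicator (phiOf μ) t) := by
    have hp0 : volume ({p} : Set ℝ) = 0 := Real.volume_singleton
    have hae : ∀ᵐ t : ℝ ∂(volume.restrict (Set.Ioo (0:ℝ) 1)), t ≠ p := by
      refine ae_restrict_of_ae ?_
      filter_upwards [compl_mem_ae_iff.2 hp0] with t ht
      simpa using ht
    filter_upwards [hae, ae_restrict_mem (measurableSet_Ioo :
        MeasurableSet (Set.Ioo (0:ℝ) 1))] with t htp ht
    rw [hFinv t ht.1 ht.2.le]
    by_cases hle : ENNReal.ofReal t ≤ q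
    · have htp' : t ≤ p := (ENNReal.ofReal_le_iff_le_toReal hqne).1 hle
      have htlt : t < p := lt_of_le_of_ne htp' htp
      rw [if_pos hle, Set.indicator_of_mem (Set.mem_Ioo.2 ⟨ht.1, htlt⟩)]
      ring
    · have hnle : ¬ t ≤ p := fun h => hle ((ENNReal.ofReal_le_iff_le_toReal hqne).2 h)
      rw [if_neg hle, Set.indicator_of_notMem (fun hm => hnle (Set.mem_Ioo.1 hm).2.le)]
      ring
  have hind_int : Integrable ((Set.Ioo (0:ℝ) p).indicator (phiOf μ)) volume :=
    (integrable_indicator_iff measurableSet_Ioo).2 hφint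
  have hg_int : IntegrableOn (fun t => phiOf μ t * Finv P Y t) (Set.Ioo (0:ℝ) 1) volume :=
    ((hind_int.const_mul (-b)).integrableOn).congr hgcongr.symm
  have hIoo_eq : Set.Ioo (0:ℝ) p ∩ Set.Ioo (0:ℝ) 1 = Set.Ioo (0:ℝ) p := by
    rw [Set.Ioo_inter_Ioo]
    simp [min_eq_left hp1]
  have hIval : (∫ t in Set.Ioo (0:ℝ) 1, phiOf μ t * Finv P Y t) = -b * den := by
    rw [integral_congr_ae hgcongr, integral_const_mul, integral_indicator measurableSet_Ioo,
      Measure.restrict_restrict measurableSet_Ioo, hIoo_eq]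
  have hρY : specRho P μ Y = (ρ₀ : EReal) := by
    unfold specRho
    rw [if_pos hg_int, hIval]
    norm_cast
    rw [hbdef]
    field_simp
  -- membership in H2
  have hYmem : Y ∈ H2 P ξ (specRho P μ) ρ₀ Sᶜ := by
    refine ⟨hint, le_of_eq hρY, ?_, ?_⟩
    · exact Eventually.of_forall fun ω hω => Set.indicator_of_notMem hω _
    · refine Eventually.of_forall fun ω hω => ?_
      have hωS : ω ∈ S := Set.not_notMem.1 hω
      rw [hYdef, Set.indicator_of_mem hωS]
      linarith [hb_pos]
  -- the value is below M
  have h1 : -b * num = -(ρ₀ * (num / den)) := by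
    rw [hbdef]; ring
  have hRgt : -M / ρ₀ < num / den := lt_of_le_of_lt (le_max_right 1 (-M / ρ₀)) hc'
  have h2 : -M < ρ₀ * (num / den) := by
    have := (div_lt_iff₀ hρ₀).1 hRgt
    linarith [mul_comm ρ₀ (num / den)]
  have hlt : -b * num < M := by rw [h1]; linarith
  refine lt_of_le_of_lt (sInf_le ⟨-b * num, ?_, rfl⟩) (EReal.coe_lt_coe_iff.2 hlt)
  exact Set.mem_iUnion.2 ⟨Sᶜ, Set.mem_iUnion.2 ⟨hSm.compl, ⟨Y, hYmem, hval⟩⟩⟩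
end
end

section
/- If E[v(λξ)] < ∞ for all λ > 0, then E[ξ I(λξ)] < ∞ for all λ > 0. -/
open MeasureTheory Set Filter
open scoped Classical ENNReal

noncomputable section

variable {Ω : Type*} [MeasurableSpace Ω]

theorem stmt19
    (P : Measure Ω) [IsProbabilityMeasure P]
    (ξ : Ω → ℝ) (hξm : Measurable ξ)
    (hξpos : ∀ᵐ ω ∂P, 0 < ξ ω)
    (hξint : Integrable ξ P) (hξ1 : (∫ ω, ξ ω ∂P) = 1)
    (u u' u'' : ℝ → ℝ)
    (hu_d1 : ∀ x ∈ Ici (0:ℝ), HasDerivWithinAt u (u' x) (Ici 0) x)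
    (hu_d2 : ∀ x ∈ Ici (0:ℝ), HasDerivWithinAt u' (u'' x) (Ici 0) x)
    (hu_conc : StrictConcaveOn ℝ (Ici 0) u)
    (hu_mono : StrictMonoOn u (Ici 0))
    (hu0 : u 0 = 0)
    (hu'lim : Tendsto u' atTop (nhds 0))
    (hv_int : ∀ l : ℝ, 0 < l → Integrable (fun ω => vconj u (l * ξ ω)) P)
    (I : ℝ → ℝ)
    (hI1 : ∀ y : ℝ, 0 < y → (∃ x > (0:ℝ), u' x = y) → 0 < I y ∧ u' (I y) = y)
    (hI2 : ∀ y : ℝ, 0 < y → (∀ x > (0:ℝ), u' x < y) → I y = 0)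
    :
    ∀ l : ℝ, 0 < l → Integrable (fun ω => ξ ω * I (l * ξ ω)) P := by
  have hconv : ConvexOn ℝ (Ici 0) (fun x => -u x) := by
    have := hu_conc.concaveOn.neg
    simpa [Pi.neg_def] using this
  -- slope bounds: for 0 ≤ a < b, u' b ≤ (u b - u a)/(b - a) ≤ u' a
  have hA : ∀ a b : ℝ, 0 ≤ a → a < b →
      u' b ≤ (u b - u a) / (b - a) ∧ (u b - u a) / (b - a) ≤ u' a := by
    intro a b ha hab
    have hb : (0:ℝ) ≤ b := le_trans ha hab.le
    have h1 := hconv.le_slope_of_hasDerivWithinAt ha hb hab ((hu_d1 a ha).neg)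
    have h2 := hconv.slope_le_of_hasDerivWithinAt ha hb hab ((hu_d1 b hb).neg)
    rw [slope_def_field] at h1 h2
    have hba : (0:ℝ) < b - a := sub_pos.2 hab
    constructor
    · have : (-u b - -u a) / (b - a) = -((u b - u a) / (b - a)) := by ring
      rw [this] at h2
      linarith
    · have : (-u b - -u a) / (b - a) = -((u b - u a) / (b - a)) := by ring
      rw [this] at h1
      linarith
  -- u' is positive on [0,∞)
  have hupos : ∀ x : ℝ, 0 ≤ x → 0 < u' x := by
    intro x hx
    have hx1 : x < x + 1 := lt_add_one x
    have hmono := hu_mono hx (le_trans hx hx1.le) hx1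
    have hslope : 0 < (u (x + 1) - u x) / (x + 1 - x) := by
      apply div_pos (by linarith) (by linarith)
    exact lt_of_lt_of_le hslope (hA x (x + 1) hx hx1).2
  -- u' is antitone on [0,∞)
  have hu'anti : ∀ a b : ℝ, 0 ≤ a → a ≤ b → u' b ≤ u' a := by
    intro a b ha hab
    rcases eq_or_lt_of_le hab with rfl | h
    · exact le_rfl
    · exact le_trans (hA a b ha h).1 (hA a b ha h).2
  -- tangent line bound
  have htangent : ∀ x0 : ℝ, 0 ≤ x0 → ∀ x : ℝ, 0 ≤ x → u x ≤ u x0 + u' x0 * (x - x0) := by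
    intro x0 hx0 x hx
    rcases lt_trichotomy x x0 with h | h | h
    · have h1 := (hA x x0 hx h).1
      have hd : (0:ℝ) < x0 - x := sub_pos.2 h
      rw [le_div_iff₀ hd] at h1
      nlinarith
    · subst h; simp
    · have := (hA x0 x hx0 h).2
      have hd : (0:ℝ) < x - x0 := sub_pos.2 h
      rw [div_le_iff₀ hd] at this
      nlinarith
  -- boundedness of vconj defining set
  have hbdd : ∀ y' : ℝ, 0 < y' → BddAbove {z | ∃ x ≥ (0:ℝ), z = u x - x * y'} := by
    intro y' hy'
    obtain ⟨x0, hx0lt, hx0ge⟩ := ((hu'lim.eventually_lt_const hy').and (eventually_ge_atTop (0:ℝ))).exists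
    refine ⟨u x0 - u' x0 * x0, ?_⟩
    rintro z ⟨x, hx, rfl⟩
    have := htangent x0 hx0ge x hx
    nlinarith
  have hvconj_ge : ∀ y' : ℝ, 0 < y' → ∀ x : ℝ, 0 ≤ x → u x - x * y' ≤ vconj u y' := by
    intro y' hy' x hx
    exact le_csSup (hbdd y' hy') ⟨x, hx, rfl⟩
  have hv0 : ∀ y' : ℝ, 0 < y' → 0 ≤ vconj u y' := by
    intro y' hy'
    have := hvconj_ge y' hy' 0 le_rfl
    simpa [hu0] using this
  -- u x ≥ x u' x
  have hu_ge : ∀ x : ℝ, 0 < x → x * u' x ≤ u x := by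
    intro x hx
    have := (hA 0 x le_rfl hx).1
    rw [hu0, sub_zero, sub_zero, le_div_iff₀ hx] at this
    linarith
  -- trichotomy
  have hu'cont : ContinuousOn u' (Ici 0) := fun x hx => (hu_d2 x hx).continuousWithinAt
  have trich : ∀ y : ℝ, 0 < y → (∃ x > (0:ℝ), u' x = y) ∨ (∀ x > (0:ℝ), u' x < y) := by
    intro y hy
    by_cases h : ∃ x > (0:ℝ), u' x = y
    · exact Or.inl h
    · right
      intro x hx
      by_contra hge
      push_neg at hge
      have hgt : y < u' x := lt_of_le_of_ne hge (by
        intro he; exact h ⟨x, hx, he.symm⟩)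
      obtain ⟨x1, hx1lt, hx1ge⟩ := ((hu'lim.eventually_lt_const hy).and (eventually_ge_atTop (x+1))).exists
      have hxx1 : x ≤ x1 := by linarith
      have hcont : ContinuousOn u' (Icc x x1) :=
        hu'cont.mono (fun z hz => le_trans hx.le hz.1)
      have hmem : y ∈ Icc (u' x1) (u' x) := ⟨hx1lt.le, hgt.le⟩
      obtain ⟨c, hc, hcy⟩ := intermediate_value_Icc' hxx1 hcont hmem
      exact h ⟨c, lt_of_lt_of_le hx hc.1, hcy⟩
  have hIpos : ∀ y : ℝ, 0 < y → 0 ≤ I y := by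
    intro y hy
    rcases trich y hy with h | h
    · exact (hI1 y hy h).1.le
    · rw [hI2 y hy h]
  -- I is antitone on (0,∞)
  have hIanti : AntitoneOn I (Ioi 0) := by
    intro y1 hy1 y2 hy2 h12
    rcases eq_or_lt_of_le h12 with rfl | hlt
    · exact le_rfl
    rcases trich y1 hy1 with h1 | h1
    · rcases trich y2 hy2 with h2 | h2
      · obtain ⟨hp1, he1⟩ := hI1 y1 hy1 h1
        obtain ⟨hp2, he2⟩ := hI1 y2 hy2 h2
        by_contra hcon
        push_neg at hcon
        have := hu'anti (I y1) (I y2) hp1.le hcon.le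
        rw [he1, he2] at this
        linarith
      · rw [hI2 y2 hy2 h2]
        exact (hI1 y1 hy1 h1).1.le
    · have h2 : ∀ x > (0:ℝ), u' x < y2 := fun x hx => lt_trans (h1 x hx) hlt
      rw [hI2 y1 hy1 h1, hI2 y2 hy2 h2]
  -- key bound
  have hkey : ∀ y : ℝ, 0 < y → y * I y ≤ 2 * vconj u (y / 2) := by
    intro y hy
    have hy2 : (0:ℝ) < y / 2 := by linarith
    rcases trich y hy with h | h
    · obtain ⟨hp, he⟩ := hI1 y hy h
      have h1 := hvconj_ge (y / 2) hy2 (I y) hp.le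
      have h2 := hu_ge (I y) hp
      rw [he] at h2
      linarith
    · rw [hI2 y hy h]
      have := hv0 (y / 2) hy2
      linarith
  -- main proof
  intro l hl
  have hl2 : (0:ℝ) < l / 2 := by linarith
  have hg : Integrable (fun ω => (2 / l) * vconj u ((l / 2) * ξ ω)) P :=
    (hv_int (l / 2) hl2).const_mul (2 / l)
  have hIexp : Antitone (fun t : ℝ => I (Real.exp t)) := by
    intro t1 t2 h
    exact hIanti (Real.exp_pos t1) (Real.exp_pos t2) (Real.exp_le_exp.2 h)
  have hm : Measurable (fun ω => ξ ω * I (Real.exp (Real.log (l * ξ ω)))) :=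
    hξm.mul (hIexp.measurable.comp ((measurable_const.mul hξm).log))
  have hfm : AEStronglyMeasurable (fun ω => ξ ω * I (l * ξ ω)) P := by
    apply hm.aestronglyMeasurable.congr
    filter_upwards [hξpos] with ω hω
    rw [Real.exp_log (mul_pos hl hω)]
  refine Integrable.mono hg hfm ?_
  filter_upwards [hξpos] with ω hω
  have hy : 0 < l * ξ ω := mul_pos hl hω
  have h0 : 0 ≤ I (l * ξ ω) := hIpos _ hy
  have hb := hkey (l * ξ ω) hy
  have hf0 : 0 ≤ ξ ω * I (l * ξ ω) := mul_nonneg hω.le h0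
  rw [Real.norm_eq_abs, Real.norm_eq_abs, abs_of_nonneg hf0]
  refine le_trans ?_ (le_abs_self _)
  have heq : (l / 2) * ξ ω = (l * ξ ω) / 2 := by ring
  rw [heq]
  have h2 : ξ ω * I (l * ξ ω) = (l * ξ ω * I (l * ξ ω)) / l := by
    field_simp
  rw [h2]
  have h3 : (l * ξ ω * I (l * ξ ω)) / l ≤ (2 * vconj u ((l * ξ ω) / 2)) / l :=
    (div_le_div_iff_of_pos_right hl).mpr hb
  have h4 : (2 * vconj u ((l * ξ ω) / 2)) / l = (2 / l) * vconj u ((l * ξ ω) / 2) := by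
    ring
  linarith
end
end
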